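/- arXiv:1710.07608 — 2 statements merged into one kernel-verified Lean document; each statement's English description precedes it below -/
import Mathlib

section
/- Let G be a countably infinite, locally finite graph, Γ a vertex-transitive subgroup of Aut(G), and let P be a probability measure on Ω_G that is Γ-invariant and ergodic with respect to the action of Γ, satisfies P[U(n) ≠ ∅] > 0, and is such that P-almost surely the multigraph of n has a unique infinite cluster with at most 2 ends. Then P-almost surely, every one-sided infinite self-avoiding path v_1, v_2, v_3, … in the multigraph of n (i.e. with n_{v_j v_{j+1}} ≥ 1 for all j and distinct vertices) contains some consecutive pair with {v_i, v_{i+1}} ∈ U(n). -/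
set_option linter.unusedSectionVars false

open MeasureTheory Filter Topology

noncomputable section

namespace RC

variable {V : Type*} [DecidableEq V]

/-- The real spin value of a Boolean spin: `true ↦ +1`, `false ↦ -1`. -/
def spin (b : Bool) : ℝ := if b then 1 else -1

/-- The off-diagonal unordered pairs inside a finite vertex set `Λ`. -/
def pairs (Λ : Finset V) : Finset (Sym2 V) := Λ.sym2.filter fun e => ¬ e.IsDiag

/-- Product of a function over the two endpoints of an unordered pair. -/
def sprod (g : V → ℝ) : Sym2 V → ℝ :=
  Sym2.lift ⟨fun u v => g u * g v, fun u v => mul_comm (g u) (g v)⟩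

/-- Extend a finite-volume spin configuration to the full vertex set by `0`. -/
def extCfg (Λ : Finset V) (σ : {x // x ∈ Λ} → Bool) (v : V) : ℝ :=
  if h : v ∈ Λ then spin (σ ⟨v, h⟩) else 0

/-- The boundary field felt at `x ∈ Λ` from the boundary condition `τ` outside `Λ`. -/
def bField (J : Sym2 V → ℝ) (Λ : Finset V) (τ : V → ℝ) (x : V) : ℝ :=
  ∑' y : V, if y ∈ Λ then 0 else J s(x, y) * τ y

/-- The finite-volume Ising Hamiltonian on `Λ` with boundary condition `τ`. -/
def ham (J : Sym2 V → ℝ) (Λ : Finset V) (τ : V → ℝ) (σ : {x // x ∈ Λ} → Bool) : ℝ :=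
  -(∑ e ∈ pairs Λ, J e * sprod (extCfg Λ σ) e)
    - ∑ x ∈ Λ.attach, spin (σ x) * bField J Λ τ (x : V)

/-- The finite-volume Ising partition function. -/
def Zspin (J : Sym2 V → ℝ) (Λ : Finset V) (β : ℝ) (τ : V → ℝ) : ℝ :=
  ∑ σ : {x // x ∈ Λ} → Bool, Real.exp (-β * ham J Λ τ σ)

/-- Finite-volume Ising expectation of an observable `f`. -/
def expval (J : Sym2 V → ℝ) (Λ : Finset V) (β : ℝ) (τ : V → ℝ)
    (f : ({x // x ∈ Λ} → Bool) → ℝ) : ℝ :=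
  (∑ σ : {x // x ∈ Λ} → Bool, Real.exp (-β * ham J Λ τ σ) * f σ) / Zspin J Λ β τ

/-- Finite-volume two-point function `⟨σ_x σ_y⟩`. -/
def corr (J : Sym2 V → ℝ) (Λ : Finset V) (β : ℝ) (τ : V → ℝ) (x y : V) : ℝ :=
  expval J Λ β τ fun σ => extCfg Λ σ x * extCfg Λ σ y

/-- Finite-volume one-point function `⟨σ_x⟩`. -/
def mag (J : Sym2 V → ℝ) (Λ : Finset V) (β : ℝ) (τ : V → ℝ) (x : V) : ℝ :=
  expval J Λ β τ fun σ => extCfg Λ σ x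

/-- Restriction of a configuration on `Λ'` to a configuration on `Λ` (junk `false`
outside `Λ'`; for `Λ ⊆ Λ'` this is the genuine restriction). -/
def restrictCfg (Λ Λ' : Finset V) (σ : {x // x ∈ Λ'} → Bool) : {x // x ∈ Λ} → Bool :=
  fun x => if h : (x : V) ∈ Λ' then σ ⟨x, h⟩ else false

open scoped Classical in
/-- The ball of radius `n` around `o` in the graph distance, as a `Finset`
(it is a finite set whenever the graph is connected and locally finite). -/
def ball (G : SimpleGraph V) (o : V) (n : ℕ) : Finset V :=
  if h : {x : V | G.dist o x ≤ n}.Finite then h.toFinset else ∅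

/-- The outer vertex boundary `∂A = {x ∉ A : x adjacent to some y ∈ A}`. -/
def vBoundary (G : SimpleGraph V) (hlf : G.LocallyFinite) (A : Finset V) : Finset V :=
  (A.biUnion fun y => haveI := hlf y; G.neighborFinset y).filter fun x => x ∉ A

/-- Amenability: the infimum of `|∂A|/|A|` over finite nonempty `A` is zero. -/
def Amenable (G : SimpleGraph V) (hlf : G.LocallyFinite) : Prop :=
  ∀ ε : ℝ, 0 < ε → ∃ A : Finset V, A.Nonempty ∧ ((vBoundary G hlf A).card : ℝ) < ε * A.card

/-- The DLR condition: `μ` is a Gibbs state for the Ising model at inverse temperature `β`. -/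
def IsGibbs (J : Sym2 V → ℝ) (β : ℝ) (μ : Measure (V → Bool)) : Prop :=
  ∀ (Λ : Finset V) (f : ({x // x ∈ Λ} → Bool) → ℝ),
    (∫ σ, f (fun x => σ x.1) ∂μ) = ∫ τ, expval J Λ β (fun v => spin (τ v)) f ∂μ

/-- `Γ`-invariance of a measure on spin configurations. -/
def cfgInvariant (Γ : Subgroup (Equiv.Perm V)) (μ : Measure (V → Bool)) : Prop :=
  ∀ φ ∈ Γ, Measure.map (fun (σ : V → Bool) (v : V) => σ (φ v)) μ = μ

/-! ### Random currents -/

/-- Currents supported on the (off-diagonal) pairs of `Λ`. -/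
abbrev CurrentOn (Λ : Finset V) : Type _ := {n : Sym2 V → ℕ // ∀ e, n e ≠ 0 → e ∈ pairs Λ}

/-- The weight `ω_β(n) = ∏ (βJ_e)^(n_e) / n_e!`. -/
def wt (J : Sym2 V → ℝ) (β : ℝ) (Λ : Finset V) (n : Sym2 V → ℕ) : ℝ :=
  ∏ e ∈ pairs Λ, (β * J e) ^ n e / (n e).factorial

/-- The sources `∂n` of a current: the vertices of `Λ` with odd degree. -/
def srcF (Λ : Finset V) (n : Sym2 V → ℕ) : Finset V :=
  Λ.filter fun x => (∑ y ∈ Λ, n s(x, y)) % 2 = 1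

/-- Total weight of the currents on `Λ` with source set `A`. -/
def totalWt (J : Sym2 V → ℝ) (β : ℝ) (Λ : Finset V) (A : Finset V) : ℝ :=
  ∑' m : CurrentOn Λ, if srcF Λ m.1 = A then wt J β Λ m.1 else 0

open scoped Classical in
/-- The probability of the event `E` under the random current measure `P^A_{Λ,β}`. -/
def curProb (J : Sym2 V → ℝ) (β : ℝ) (Λ : Finset V) (A : Finset V)
    (E : (Sym2 V → ℕ) → Prop) : ℝ :=
  (∑' m : CurrentOn Λ, if srcF Λ m.1 = A ∧ E m.1 then wt J β Λ m.1 else 0)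
    / totalWt J β Λ A

/-- `x` and `y` are connected in the multigraph of the current `n` by a path whose
vertices all lie in `S`. -/
def connOn (n : Sym2 V → ℕ) (S : Set V) (x y : V) : Prop :=
  ∃ l : List V, l.head? = some x ∧ l.getLast? = some y ∧
    List.Chain' (fun u v => 0 < n s(u, v)) l ∧ ∀ v ∈ l, v ∈ S

/-- `x` and `y` are connected in the multigraph of the current `n`. -/
def conn (n : Sym2 V → ℕ) (x y : V) : Prop := connOn n Set.univ x y

/-- The cluster of `x` in the multigraph of the current `n`. -/
def cluster (n : Sym2 V → ℕ) (x : V) : Set V := {y | conn n x y}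

/-- `x` lies in an infinite cluster of the current `n`. -/
def inInf (n : Sym2 V → ℕ) (x : V) : Prop := (cluster n x).Infinite

/-- The current `n` with its value on the pair `e₀` set to zero. -/
def dropE (n : Sym2 V → ℕ) (e₀ : Sym2 V) (e : Sym2 V) : ℕ := if e = e₀ then 0 else n e

/-- The event `𝒜_{x,y}`: `n_{xy} = 1`, and in `n_{[xy]}` both `x` and `y` lie in
infinite clusters but are not connected to each other. -/
def eventA (x y : V) (n : Sym2 V → ℕ) : Prop :=
  n s(x, y) = 1 ∧ inInf (dropE n s(x, y)) x ∧ inInf (dropE n s(x, y)) y ∧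
    ¬ conn (dropE n s(x, y)) x y

/-- `𝖴(n) = { {x,y} : n ∈ 𝒜_{x,y} }`. -/
def Uset (n : Sym2 V → ℕ) : Set (Sym2 V) := {e | ∃ x y, e = s(x, y) ∧ eventA x y n}

/-- There is at most one infinite cluster. -/
def uniqueInfCluster (n : Sym2 V → ℕ) : Prop :=
  ∀ x y, inInf n x → inInf n y → conn n x y

/-- The cluster of `x` has at most `k` ends: after removing any finite vertex set `S`,
there are no `k+1` vertices of the cluster lying in pairwise distinct infinite
connected components of the complement of `S`. -/
def atMostEnds (n : Sym2 V → ℕ) (x : V) (k : ℕ) : Prop :=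
  ∀ S T : Finset V,
    (∀ y ∈ T, conn n x y ∧ y ∉ S ∧ {z | connOn n ((S : Set V))ᶜ y z}.Infinite) →
    (∀ y ∈ T, ∀ z ∈ T, y ≠ z → ¬ connOn n ((S : Set V))ᶜ y z) → T.card ≤ k

/-- Number of times the unordered edge `e` is traversed by the walk `l`. -/
def wcount : List V → Sym2 V → ℕ
  | [], _ => 0
  | [_], _ => 0
  | a :: b :: t, e => (if s(a, b) = e then 1 else 0) + wcount (b :: t) e

/-- There exist `k` pairwise edge-disjoint (with parallel edges counted with
multiplicity) self-avoiding paths from `x` to `y` in the multigraph of `n`. -/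
def kPaths (n : Sym2 V → ℕ) (x y : V) (k : ℕ) : Prop :=
  ∃ w : Fin k → List V,
    (∀ j, (w j).head? = some x ∧ (w j).getLast? = some y ∧ (w j).Nodup) ∧
    ∀ e, (∑ j, wcount (w j) e) ≤ n e

open scoped Classical in
/-- Whether the one-sided infinite path `p` uses the unordered edge `e`. -/
def useE (p : ℕ → V) (e : Sym2 V) : ℕ := if ∃ i, s(p i, p (i + 1)) = e then 1 else 0

/-- There exist `k` pairwise edge-disjoint (with multiplicity) one-sided infinite
self-avoiding paths started at `x` in the multigraph of `n`. -/
def kInfPaths (n : Sym2 V → ℕ) (x : V) (k : ℕ) : Prop :=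
  ∃ p : Fin k → ℕ → V,
    (∀ j, Function.Injective (p j) ∧ p j 0 = x) ∧ ∀ e, (∑ j, useE (p j) e) ≤ n e

/-! ### The ghost vertex `δ` -/

/-- The total coupling from `x` to the exterior of `Λ`. -/
def bWeight (J : Sym2 V → ℝ) (Λ : Finset V) (x : V) : ℝ :=
  ∑' y : V, if y ∈ Λ then 0 else J s(x, y)

def optJfun (J : Sym2 V → ℝ) (Λ : Finset V) : Option V → Option V → ℝ
  | some x, some y => J s(x, y)
  | some x, none => bWeight J Λ x
  | none, some y => bWeight J Λ y
  | none, none => 0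

lemma optJfun_comm (J : Sym2 V → ℝ) (Λ : Finset V) (a b : Option V) :
    optJfun J Λ a b = optJfun J Λ b a := by
  cases a with
  | none => cases b <;> rfl
  | some x =>
    cases b with
    | none => rfl
    | some y => show J s(x, y) = J s(y, x); rw [Sym2.eq_swap]

/-- The couplings on `Λ ∪ {δ}` (with `δ = none`): `J_{xδ} = Σ_{y ∉ Λ} J_{xy}`. -/
def optJ (J : Sym2 V → ℝ) (Λ : Finset V) : Sym2 (Option V) → ℝ :=
  Sym2.lift ⟨optJfun J Λ, optJfun_comm J Λ⟩

/-- The vertex set `Λ ∪ {δ}`. -/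
def optSet (Λ : Finset V) : Finset (Option V) := insert none (Λ.image some)

def optPairfun (n : Sym2 V → ℕ) : Option V → Option V → ℕ
  | some x, some y => n s(x, y)
  | _, _ => 0

lemma optPairfun_comm (n : Sym2 V → ℕ) (a b : Option V) :
    optPairfun n a b = optPairfun n b a := by
  cases a with
  | none => cases b <;> rfl
  | some x =>
    cases b with
    | none => rfl
    | some y => show n s(x, y) = n s(y, x); rw [Sym2.eq_swap]

/-- View a current on `Λ` as a current on `Λ ∪ {δ}` (extend by zero). -/
def liftCur (n : Sym2 V → ℕ) : Sym2 (Option V) → ℕ :=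
  Sym2.lift ⟨optPairfun n, optPairfun_comm n⟩

/-- Push a current on `Λ ∪ {δ}` down to `Λ` (discarding the pairs containing `δ`). -/
def projCur (n : Sym2 (Option V) → ℕ) : Sym2 V → ℕ := fun e => n (Sym2.map some e)

/-- The event `𝒜^f_{x,y} ⊆ Ω_{Λ∪δ}`: `n_{xy} = 1`, and in `n_{[xy]}` both `x` and `y`
are connected to `δ` but `x` is not connected to `y` inside `Λ`. -/
def eventAf (Λ : Finset V) (x y : V) (n : Sym2 (Option V) → ℕ) : Prop :=
  n s(some x, some y) = 1 ∧
    conn (dropE n s(some x, some y)) (some x) (none : Option V) ∧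
    conn (dropE n s(some x, some y)) (some y) (none : Option V) ∧
    ¬ connOn (dropE n s(some x, some y)) (some '' (Λ : Set V)) (some x) (some y)

/-! ### Current measures and infinite volume -/

/-- The random current measure `P^A_{Λ,β}` as a measure on `Ω_G = ℕ^{P₂(G)}`. -/
def curMeasure (J : Sym2 V → ℝ) (β : ℝ) (Λ : Finset V) (A : Finset V) :
    Measure (Sym2 V → ℕ) :=
  (ENNReal.ofReal (totalWt J β Λ A))⁻¹ •
    Measure.sum fun m : CurrentOn Λ =>
      ENNReal.ofReal (if srcF Λ m.1 = A then wt J β Λ m.1 else 0) • Measure.dirac m.1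

/-- The action of a vertex permutation on currents. -/
def curShift (φ : Equiv.Perm V) (n : Sym2 V → ℕ) : Sym2 V → ℕ :=
  fun e => n (Sym2.map φ e)

/-- `Γ`-invariance of a measure on currents. -/
def curInvariant (Γ : Subgroup (Equiv.Perm V)) (P : Measure (Sym2 V → ℕ)) : Prop :=
  ∀ φ ∈ Γ, Measure.map (curShift φ) P = P

/-- Ergodicity of a measure on currents with respect to the `Γ`-action. -/
def curErgodic (Γ : Subgroup (Equiv.Perm V)) (P : Measure (Sym2 V → ℕ)) : Prop :=
  ∀ A : Set (Sym2 V → ℕ), MeasurableSet A → (∀ φ ∈ Γ, curShift φ ⁻¹' A = A) →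
    P A = 0 ∨ P A = 1

/-- Weak convergence of a sequence of measures: convergence of integrals of all
bounded continuous functions. -/
def weakTendsto {Ω : Type*} [TopologicalSpace Ω] [MeasurableSpace Ω]
    (μseq : ℕ → Measure Ω) (P : Measure Ω) : Prop :=
  ∀ f : Ω → ℝ, Continuous f → (∃ M, ∀ ω, |f ω| ≤ M) →
    Tendsto (fun n => ∫ ω, f ω ∂(μseq n)) atTop (nhds (∫ ω, f ω ∂P))

/-- `P` is a weak limit point of the sequence `μseq`. -/
def isWeakLimitPoint {Ω : Type*} [TopologicalSpace Ω] [MeasurableSpace Ω]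
    (μseq : ℕ → Measure Ω) (P : Measure Ω) : Prop :=
  IsProbabilityMeasure P ∧ ∃ k : ℕ → ℕ, StrictMono k ∧ weakTendsto (fun i => μseq (k i)) P

/-- The sequence of sourceless (free) random current measures on the balls `B_n`. -/
def freeCurSeq (J : Sym2 V → ℝ) (β : ℝ) (G : SimpleGraph V) (o : V) :
    ℕ → Measure (Sym2 V → ℕ) := fun n => curMeasure J β (ball G o n) ∅

/-- The sequence of sourceless random current measures on `B_n ∪ δ`, pushed to `Ω_G`. -/
def plusCurSeq (J : Sym2 V → ℝ) (β : ℝ) (G : SimpleGraph V) (o : V) :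
    ℕ → Measure (Sym2 V → ℕ) := fun n =>
  Measure.map projCur (curMeasure (optJ J (ball G o n)) β (optSet (ball G o n)) ∅)

/-! ### FK-Ising -/

/-- The graph of open edges of a percolation configuration. -/
def fkGraph (c : Sym2 V → Bool) : SimpleGraph V where
  Adj x y := x ≠ y ∧ c s(x, y) = true
  symm := by
    constructor
    intro x y h
    refine ⟨h.1.symm, ?_⟩
    rw [Sym2.eq_swap]
    exact h.2
  loopless := ⟨fun x h => h.1 rfl⟩

/-- Combine an interior configuration `ω` on the pairs of `Λ` with a boundary
condition `ξ` outside. -/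
def combineCfg (Λ : Finset V) (ξ : Sym2 V → Bool) (ω : {e // e ∈ pairs Λ} → Bool)
    (e : Sym2 V) : Bool :=
  if h : e ∈ pairs Λ then ω ⟨e, h⟩ else ξ e

/-- The number of connected components intersecting `Λ`. -/
def kCount (c : Sym2 V → Bool) (Λ : Finset V) : ℕ :=
  ((fun v => (fkGraph c).connectedComponentMk v) '' (Λ : Set V)).ncard

/-- The FK-Ising weight `2^{k^ξ(ω)} ∏ (e^{2βJ_e} - 1)^{ω_e}`. -/
def fkW (J : Sym2 V → ℝ) (β : ℝ) (Λ : Finset V) (ξ : Sym2 V → Bool)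
    (ω : {e // e ∈ pairs Λ} → Bool) : ℝ :=
  2 ^ kCount (combineCfg Λ ξ ω) Λ *
    ∏ e : {e // e ∈ pairs Λ}, if ω e then Real.exp (2 * β * J e.1) - 1 else 1

/-- Finite-volume FK-Ising expectation with boundary condition `ξ`. -/
def fkExp (J : Sym2 V → ℝ) (β : ℝ) (Λ : Finset V) (ξ : Sym2 V → Bool)
    (f : ({e // e ∈ pairs Λ} → Bool) → ℝ) : ℝ :=
  (∑ ω : {e // e ∈ pairs Λ} → Bool, fkW J β Λ ξ ω * f ω) /
    ∑ ω : {e // e ∈ pairs Λ} → Bool, fkW J β Λ ξ ω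

/-- The DLR condition for infinite-volume FK-Ising measures. -/
def IsFKGibbs (J : Sym2 V → ℝ) (β : ℝ) (ν : Measure (Sym2 V → Bool)) : Prop :=
  ∀ (Λ : Finset V) (f : ({e // e ∈ pairs Λ} → Bool) → ℝ),
    (∫ ω, f (fun e => ω e.1) ∂ν) = ∫ ξ, fkExp J β Λ ξ f ∂ν


/-! ### Auxiliary development for `statement11` -/

section Claim1Aux

open scoped Classical

variable {n m : Sym2 V → ℕ} {S S' : Set V} {x y z : V}

lemma mem_of_head? {l : List V} (h : l.head? = some x) : x ∈ l := by
  cases l with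
  | nil => simp at h
  | cons a t => simp_all

lemma mem_of_getLast? {l : List V} (h : l.getLast? = some y) : y ∈ l := by
  rcases List.mem_getLast?_eq_getLast (by simpa using h) with ⟨hne, rfl⟩
  exact List.getLast_mem hne

lemma connOn_left_mem (h : connOn n S x y) : x ∈ S := by
  obtain ⟨l, hh, -, -, hm⟩ := h
  exact hm _ (mem_of_head? hh)

lemma connOn_right_mem (h : connOn n S x y) : y ∈ S := by
  obtain ⟨l, -, hl, -, hm⟩ := h
  exact hm _ (mem_of_getLast? hl)

lemma connOn_refl (hx : x ∈ S) : connOn n S x x :=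
  ⟨[x], rfl, rfl, List.isChain_singleton x, by simpa using hx⟩

lemma connOn_single (hx : x ∈ S) (hy : y ∈ S) (hpos : 0 < n s(x, y)) :
    connOn n S x y := by
  refine ⟨[x, y], rfl, rfl, ?_, ?_⟩
  · exact List.isChain_cons_cons.2 ⟨hpos, List.isChain_singleton y⟩
  · intro v hv
    rcases List.mem_cons.1 hv with rfl | hv'
    · exact hx
    · have : v = y := by simpa using hv'
      subst this; exact hy

lemma connOn_mono (hmn : ∀ e, 0 < n e → 0 < m e) (hSS : S ⊆ S')
    (h : connOn n S x y) : connOn m S' x y := by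
  obtain ⟨l, hh, hl, hc, hm⟩ := h
  exact ⟨l, hh, hl, hc.imp fun a b hab => hmn _ hab, fun v hv => hSS (hm v hv)⟩

lemma connOn_symm (h : connOn n S x y) : connOn n S y x := by
  obtain ⟨l, hh, hl, hc, hm⟩ := h
  refine ⟨l.reverse, by simpa using hl, by simpa using hh, ?_, by simpa using hm⟩
  show List.IsChain _ _
  rw [List.isChain_reverse]
  exact hc.imp fun a b hab => show 0 < n s(b, a) by rwa [Sym2.eq_swap] at hab

lemma connOn_trans (h1 : connOn n S x y) (h2 : connOn n S y z) :
    connOn n S x z := by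
  obtain ⟨l1, h1h, h1l, h1c, h1m⟩ := h1
  obtain ⟨l2, h2h, h2l, h2c, h2m⟩ := h2
  cases l2 with
  | nil => simp at h2h
  | cons b t =>
    have hb : b = y := by simpa using h2h
    subst hb
    cases t with
    | nil =>
      have : b = z := by simpa using h2l
      subst this
      exact ⟨l1, h1h, h1l, h1c, h1m⟩
    | cons c t' =>
      refine ⟨l1 ++ c :: t', ?_, ?_, ?_, ?_⟩
      · rw [List.head?_append, h1h]; rfl
      · rw [List.getLast?_append_cons]
        rw [List.getLast?_cons_cons] at h2l
        exact h2l
      · refine List.isChain_append.2 ⟨h1c, (List.isChain_cons_cons.1 h2c).2, ?_⟩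
        intro u hu v hv
        rw [h1l] at hu
        have hu' : u = b := by symm; simpa using hu
        have hv' : v = c := by symm; simpa using hv
        subst hu'; subst hv'
        exact (List.isChain_cons_cons.1 h2c).1
      · intro v hv
        rcases List.mem_append.1 hv with h | h
        · exact h1m v h
        · exact h2m v (List.mem_cons_of_mem _ h)

lemma chain_all_of_closed (P : V → Prop)
    (step : ∀ a b, P a → a ∈ S → b ∈ S → 0 < n s(a, b) → P b) :
    ∀ (l : List V) (x : V), l.head? = some x →
      List.Chain' (fun u v => 0 < n s(u, v)) l → (∀ v ∈ l, v ∈ S) → P x →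
      ∀ v ∈ l, P v := by
  intro l
  induction l with
  | nil => simp
  | cons a t ih =>
    intro x hh hc hm hP v hv
    have hax : a = x := by simpa using hh
    subst hax
    cases t with
    | nil => simp_all
    | cons b t' =>
      rcases List.mem_cons.1 hv with rfl | hv'
      · exact hP
      · have hPb : P b :=
          step a b hP (hm a (by simp)) (hm b (by simp)) (List.isChain_cons_cons.1 hc).1
        exact ih b rfl (List.isChain_cons_cons.1 hc).2
          (fun w hw => hm w (List.mem_cons_of_mem _ hw)) hPb v hv'

/-- Master closure lemma: walks starting at a point satisfying a property closed
under steps inside `S` stay in that property. -/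
lemma connOn_closed (P : V → Prop) (h : connOn n S x y) (hx : P x)
    (step : ∀ a b, P a → a ∈ S → b ∈ S → 0 < n s(a, b) → P b) :
    P y ∧ connOn n (S ∩ {v | P v}) x y := by
  obtain ⟨l, hh, hl, hc, hm⟩ := h
  have hall : ∀ v ∈ l, P v := chain_all_of_closed P step l x hh hc hm hx
  exact ⟨hall y (mem_of_getLast? hl), l, hh, hl, hc,
    fun v hv => ⟨hm v hv, hall v hv⟩⟩

end Claim1Aux

section Claim1Aux2

open scoped Classical

variable {n m : Sym2 V → ℕ} {S S' : Set V} {x y z a b : V}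

/-- The current with all `𝖴(n)`-edges removed. -/
noncomputable def offU (n : Sym2 V → ℕ) : Sym2 V → ℕ :=
  fun e => if e ∈ Uset n then 0 else n e

lemma offU_pos {e : Sym2 V} : 0 < offU n e ↔ 0 < n e ∧ e ∉ Uset n := by
  unfold offU; split_ifs with h <;> simp [h]

lemma dropE_pos {e f : Sym2 V} : 0 < dropE n e f ↔ 0 < n f ∧ f ≠ e := by
  unfold dropE; split_ifs with h <;> simp [h]

lemma conn_of_connOn (h : connOn n S x y) : conn n x y :=
  connOn_mono (fun _ h => h) (fun _ _ => Set.mem_univ _) h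

lemma conn_refl : conn n x x := connOn_refl (Set.mem_univ _)

lemma eventA_symm (h : eventA x y n) : eventA y x n := by
  obtain ⟨h1, h2, h3, h4⟩ := h
  rw [Sym2.eq_swap] at h1 h2 h3 h4
  exact ⟨h1, h3, h2, fun hc => h4 (connOn_symm hc)⟩

lemma eventA_of_mem_Uset {e : Sym2 V} (he : e ∈ Uset n) :
    ∀ a b, e = s(a, b) → eventA a b n := by
  obtain ⟨u, v, rfl, huv⟩ := he
  intro a b hab
  rcases Sym2.eq_iff.1 hab with ⟨rfl, rfl⟩ | ⟨rfl, rfl⟩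
  · exact huv
  · exact eventA_symm huv

lemma eventA_ne (h : eventA a b n) : a ≠ b := by
  rintro rfl
  exact h.2.2.2 conn_refl

/-- The two sides of a cut edge are disjoint. -/
lemma eventA_disjoint (h : eventA a b n) {u : V}
    (ha : conn (dropE n s(a, b)) a u) (hb : conn (dropE n s(a, b)) b u) : False :=
  h.2.2.2 (connOn_trans ha (connOn_symm hb))

/-- The two sides of a cut edge cover the cluster. -/
lemma eventA_cover (h : eventA a b n) {u : V} (hu : conn n a u) :
    conn (dropE n s(a, b)) a u ∨ conn (dropE n s(a, b)) b u := by
  refine (connOn_closed (fun v => conn (dropE n s(a, b)) a v ∨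
    conn (dropE n s(a, b)) b v) hu (Or.inl conn_refl) ?_).1
  intro c d hc _ _ hcd
  by_cases hce : s(c, d) = s(a, b)
  · rcases Sym2.eq_iff.1 hce with ⟨rfl, rfl⟩ | ⟨rfl, rfl⟩
    · exact Or.inr conn_refl
    · exact Or.inl conn_refl
  · have hpos : 0 < dropE n s(a, b) s(c, d) := dropE_pos.2 ⟨hcd, hce⟩
    rcases hc with h' | h'
    · exact Or.inl (connOn_trans h' (connOn_single trivial trivial hpos))
    · exact Or.inr (connOn_trans h' (connOn_single trivial trivial hpos))

/-- Number of traversals of `l` through edges of `E`. -/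
noncomputable def ecount (E : Set (Sym2 V)) : List V → ℕ
  | [] => 0
  | [_] => 0
  | a :: b :: t => (if s(a, b) ∈ E then 1 else 0) + ecount E (b :: t)

@[simp] lemma ecount_nil (E : Set (Sym2 V)) : ecount E ([] : List V) = 0 := rfl
@[simp] lemma ecount_single (E : Set (Sym2 V)) (a : V) : ecount E [a] = 0 := rfl
lemma ecount_cons_cons (E : Set (Sym2 V)) (a b : V) (t : List V) :
    ecount E (a :: b :: t) = (if s(a, b) ∈ E then 1 else 0) + ecount E (b :: t) := rfl

lemma ecount_append (E : Set (Sym2 V)) :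
    ∀ (l₁ : List V) (a : V) (l₂ : List V),
      ecount E (l₁ ++ a :: l₂) = ecount E (l₁ ++ [a]) + ecount E (a :: l₂) := by
  intro l₁
  induction l₁ with
  | nil => intro a l₂; simp
  | cons c t ih =>
    intro a l₂
    cases t with
    | nil => simp [ecount_cons_cons]
    | cons d t' =>
      have h1 : (c :: d :: t') ++ a :: l₂ = c :: d :: (t' ++ a :: l₂) := rfl
      have h2 : (c :: d :: t') ++ [a] = c :: d :: (t' ++ [a]) := rfl
      rw [h1, h2, ecount_cons_cons, ecount_cons_cons]
      have := ih a l₂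
      simp only [List.cons_append] at this
      omega

lemma chain_of_ecount_zero (E : Set (Sym2 V)) :
    ∀ l : List V, ecount E l = 0 →
      List.Chain' (fun u v => 0 < n s(u, v)) l →
      List.Chain' (fun u v => 0 < n s(u, v) ∧ s(u, v) ∉ E) l := by
  intro l
  induction l with
  | nil => simp [List.Chain']
  | cons a t ih =>
    intro h0 hc
    cases t with
    | nil => simp [List.Chain']
    | cons b t' =>
      rw [ecount_cons_cons] at h0
      have hE : s(a, b) ∉ E := by
        intro hmem; rw [if_pos hmem] at h0; omega
      rw [if_neg hE] at h0
      exact List.isChain_cons_cons.2 ⟨⟨(List.isChain_cons_cons.1 hc).1, hE⟩,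
        ih (by omega) (List.isChain_cons_cons.1 hc).2⟩

lemma exists_first_cross (E : Set (Sym2 V)) :
    ∀ l : List V, ecount E l ≠ 0 →
      ∃ l₁ a b l₂, l = l₁ ++ a :: b :: l₂ ∧ ecount E (l₁ ++ [a]) = 0 ∧
        s(a, b) ∈ E ∧ ecount E l = ecount E (b :: l₂) + 1 := by
  intro l
  induction l with
  | nil => simp
  | cons a t ih =>
    intro h0
    cases t with
    | nil => simp at h0
    | cons b t' =>
      by_cases hab : s(a, b) ∈ E
      · refine ⟨[], a, b, t', rfl, rfl, hab, ?_⟩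
        rw [ecount_cons_cons, if_pos hab]; omega
      · rw [ecount_cons_cons, if_neg hab] at h0
        obtain ⟨l₁, u, v, l₂, heq, h1, h2, h3⟩ := ih (by omega)
        refine ⟨a :: l₁, u, v, l₂, by rw [heq]; rfl, ?_, h2, ?_⟩
        · cases hl₁ : l₁ with
          | nil =>
            subst hl₁
            have heq' : b :: t' = u :: v :: l₂ := by simpa using heq
            injection heq' with hub htv
            simp only [List.cons_append, List.nil_append] at h1 ⊢
            rw [ecount_cons_cons, ← hub, if_neg hab]
            simp
          | cons w t'' =>
            subst hl₁
            have heq' : b :: t' = w :: (t'' ++ u :: v :: l₂) := by simpa using heq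
            injection heq' with hwb _
            simp only [List.cons_append] at h1 ⊢
            rw [← hwb] at h1 ⊢
            rw [ecount_cons_cons, if_neg hab]
            omega
        · rw [ecount_cons_cons, if_neg hab, h3]
          omega
  
lemma exists_last_cross (E : Set (Sym2 V)) :
    ∀ l : List V, ecount E l ≠ 0 →
      ∃ l₁ u v l₂, l = l₁ ++ u :: v :: l₂ ∧ s(u, v) ∈ E ∧
        ecount E (v :: l₂) = 0 := by
  intro l
  induction l with
  | nil => simp
  | cons a t ih =>
    intro h0
    cases t with
    | nil => simp at h0
    | cons b t' =>
      by_cases ht : ecount E (b :: t') = 0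
      · rw [ecount_cons_cons, ht] at h0
        have hab : s(a, b) ∈ E := by
          by_contra hc; rw [if_neg hc] at h0; omega
        exact ⟨[], a, b, t', rfl, hab, ht⟩
      · obtain ⟨l₁, u, v, l₂, heq, h2, h3⟩ := ih ht
        exact ⟨a :: l₁, u, v, l₂, by rw [heq]; rfl, h2, h3⟩

end Claim1Aux2

section Claim1Aux3

open scoped Classical

variable {n : Sym2 V → ℕ} {x y : V}

lemma cU_to_dropE {e : Sym2 V} (he : e ∈ Uset n) (h : conn (offU n) x y) :
    conn (dropE n e) x y :=
  connOn_mono (fun f hf => by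
    rcases offU_pos.1 hf with ⟨h1, h2⟩
    exact dropE_pos.2 ⟨h1, fun hfe => h2 (hfe ▸ he)⟩) (fun _ h => h) h

lemma conn_of_offU (h : conn (offU n) x y) : conn n x y :=
  connOn_mono (fun f hf => (offU_pos.1 hf).1) (fun _ h => h) h

lemma cu_of_ecount_zero {l : List V} (h0 : ecount (Uset n) l = 0)
    (hh : l.head? = some x) (hl : l.getLast? = some y)
    (hc : List.Chain' (fun u v => 0 < n s(u, v)) l) : conn (offU n) x y :=
  ⟨l, hh, hl, (chain_of_ecount_zero (Uset n) l h0 hc).imp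
    (fun a b hab => offU_pos.2 hab), fun v _ => Set.mem_univ v⟩

/-- Separation lemma, main induction: if `x` and `y` are connected but not
`𝖴`-avoiding connected, then some `𝖴`-edge separates them. -/
lemma sep_aux : ∀ (N : ℕ) (l : List V) (x y : V), ecount (Uset n) l ≤ N →
    l.head? = some x → l.getLast? = some y →
    List.Chain' (fun u v => 0 < n s(u, v)) l →
    ¬ conn (offU n) x y →
    ∃ a b, eventA a b n ∧ conn (dropE n s(a, b)) a x ∧ conn (dropE n s(a, b)) b y := by
  intro N
  induction N with
  | zero =>
    intro l x y hcount hh hl hc hcu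
    exact absurd (cu_of_ecount_zero (Nat.le_zero.1 hcount) hh hl hc) hcu
  | succ N ih =>
    intro l x y hcount hh hl hc hcu
    by_cases h0 : ecount (Uset n) l = 0
    · exact absurd (cu_of_ecount_zero h0 hh hl hc) hcu
    · obtain ⟨l₁, a, b, l₂, rfl, hpre0, habU, hcnt⟩ :=
        exists_first_cross (Uset n) l h0
      have hA : eventA a b n := eventA_of_mem_Uset habU a b rfl
      have hassoc : l₁ ++ a :: b :: l₂ = (l₁ ++ [a]) ++ b :: l₂ := by simp
      have hph : (l₁ ++ [a]).head? = some x := by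
        simp only [List.head?_append, List.head?_cons] at hh ⊢
        exact hh
      have hpla : (l₁ ++ [a]).getLast? = some a := by
        rw [List.getLast?_append_cons]; rfl
      rw [hassoc] at hc
      obtain ⟨hcpre, hcsuf, hjunc⟩ := List.isChain_append.1 hc
      have hsl : (b :: l₂).getLast? = some y := by
        rw [hassoc, List.getLast?_append_cons] at hl
        exact hl
      have hcux : conn (offU n) x a := cu_of_ecount_zero hpre0 hph hpla hcpre
      have hdax : conn (dropE n s(a, b)) a x := connOn_symm (cU_to_dropE habU hcux)
      have hnxa : conn n x a := conn_of_offU hcux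
      have hnby : conn n b y :=
        ⟨b :: l₂, rfl, hsl, hcsuf, fun v _ => Set.mem_univ v⟩
      have hnay : conn n a y := by
        refine connOn_trans (connOn_single (Set.mem_univ a) (Set.mem_univ b) ?_) hnby
        exact hjunc a (by rw [hpla]; rfl) b rfl
      rcases eventA_cover hA hnay with hay | hby
      swap
      · exact ⟨a, b, hA, hdax, hby⟩
      by_cases hse : ecount ({s(a, b)} : Set (Sym2 V)) (b :: l₂) = 0
      · have hby : conn (dropE n s(a, b)) b y :=
          ⟨b :: l₂, rfl, hsl,
            (chain_of_ecount_zero _ _ hse hcsuf).imp (fun u v huv =>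
              dropE_pos.2 ⟨huv.1, fun hh' => huv.2 (by simpa using hh')⟩),
            fun v _ => Set.mem_univ v⟩
        exact (eventA_disjoint hA hay hby).elim
      · obtain ⟨s₁, u, v, s₂, hseq, huvE, hs20⟩ :=
          exists_last_cross ({s(a, b)} : Set (Sym2 V)) (b :: l₂) hse
        have huv : s(u, v) = s(a, b) := by simpa using huvE
        rw [hseq] at hcsuf hsl
        have hs2assoc : s₁ ++ u :: v :: s₂ = (s₁ ++ [u]) ++ v :: s₂ := by simp
        rw [hs2assoc] at hcsuf
        obtain ⟨hcs1, hcvs, hjunc2⟩ := List.isChain_append.1 hcsuf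
        have hvy : (v :: s₂).getLast? = some y := by
          rw [hs2assoc, List.getLast?_append_cons] at hsl
          exact hsl
        have hcvy : conn (dropE n s(a, b)) v y :=
          ⟨v :: s₂, rfl, hvy,
            (chain_of_ecount_zero _ _ hs20 hcvs).imp (fun c d hcd =>
              dropE_pos.2 ⟨hcd.1, fun hh' => hcd.2 (by simpa using hh')⟩),
            fun w _ => Set.mem_univ w⟩
        rcases Sym2.eq_iff.1 huv with ⟨hua, hvb⟩ | ⟨hub, hva⟩
        · subst hvb
          exact (eventA_disjoint hA hay hcvy).elim
        · subst hva
          cases s₂ with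
          | nil =>
            have hya : v = y := by simpa using hvy
            subst hya
            exact absurd hcux hcu
          | cons c t =>
            have hRvc : 0 < n s(v, c) := (List.isChain_cons_cons.1 hcvs).1
            refine ih ((l₁ ++ [v]) ++ c :: t) x y ?_ ?_ ?_ ?_ hcu
            · have he1 : (l₁ ++ [v]) ++ c :: t = l₁ ++ v :: c :: t := by simp
              rw [he1]
              have he2 : ecount (Uset n) (l₁ ++ v :: c :: t) =
                  ecount (Uset n) (l₁ ++ [v]) + ecount (Uset n) (v :: c :: t) :=
                ecount_append _ _ _ _
              have he3 : ecount (Uset n) (b :: l₂) =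
                  ecount (Uset n) (s₁ ++ [u]) + ecount (Uset n) (u :: v :: c :: t) := by
                rw [hseq]; exact ecount_append _ _ _ _
              have he4 : ecount (Uset n) (u :: v :: c :: t) =
                  (if s(u, v) ∈ Uset n then 1 else 0) +
                    ecount (Uset n) (v :: c :: t) := ecount_cons_cons _ _ _ _
              rw [if_pos (show s(u, v) ∈ Uset n by rw [huv]; exact habU)] at he4
              omega
            · simp only [List.head?_append, List.head?_cons] at hph ⊢
              rw [hph]
              rfl
            · rw [List.getLast?_append_cons]
              rw [List.getLast?_cons_cons] at hvy
              exact hvy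
            · refine List.isChain_append.2 ⟨hcpre, (List.isChain_cons_cons.1 hcvs).2, ?_⟩
              intro p hp q hq
              have hp' : p = v := by rw [hpla] at hp; exact (Option.some.inj hp).symm
              have hq' : q = c := by symm; simpa using hq
              subst hp'; subst hq'
              exact hRvc
  
/-- If `x, y` are connected in `n` but not in `n` minus the `𝖴`-edges, then some
`𝖴`-edge separates them. -/
lemma exists_separating_cut (hxy : conn n x y) (hncu : ¬ conn (offU n) x y) :
    ∃ a b, eventA a b n ∧ conn (dropE n s(a, b)) a x ∧ conn (dropE n s(a, b)) b y := by
  obtain ⟨l, hh, hl, hc, -⟩ := hxy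
  exact sep_aux (ecount (Uset n) l) l x y le_rfl hh hl hc hncu

end Claim1Aux3

section Claim1Aux4

open scoped Classical

variable {n : Sym2 V → ℕ} {x y : V}

/-- `x`'s `𝖴`-avoiding cluster escapes every finite set. -/
def endy (n : Sym2 V → ℕ) (x : V) : Prop :=
  ∀ S : Finset V, ∃ w, conn (offU n) x w ∧
    {u | connOn (offU n) ((S : Set V))ᶜ w u}.Infinite

/-- The set of vertices lying in an escaping `𝖴`-avoiding cluster that are an
endpoint of a `𝖴`-edge. -/
def FsetU (n : Sym2 V → ℕ) : Set V :=
  {x | endy n x ∧ ∃ y, s(x, y) ∈ Uset n}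

lemma mem_Uset_of_eventA (h : eventA x y n) : s(x, y) ∈ Uset n := ⟨x, y, rfl, h⟩

lemma inInf_of_endy (h : endy n x) : inInf n x := by
  obtain ⟨w, hw, hinf⟩ := h ∅
  refine Set.Infinite.mono ?_ hinf
  intro u hu
  exact connOn_trans (conn_of_offU hw)
    (connOn_mono (fun f hf => (offU_pos.1 hf).1) (fun _ _ => Set.mem_univ _) hu)

lemma endy_congr (h : endy n x) (hxy : conn (offU n) x y) : endy n y := by
  intro S
  obtain ⟨w, hw, hinf⟩ := h S
  exact ⟨w, connOn_trans (connOn_symm hxy) hw, hinf⟩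

/-- The `y`-sides of two distinct cut edges whose `x`-endpoints lie in a common
`𝖴`-avoiding cluster are disjoint. -/
lemma Y_disjoint {x₁ y₁ x₂ y₂ u : V}
    (hA₁ : eventA x₁ y₁ n) (hA₂ : eventA x₂ y₂ n)
    (hc : conn (offU n) x₁ x₂) (hne : s(x₁, y₁) ≠ s(x₂, y₂))
    (h1 : conn (dropE n s(x₁, y₁)) y₁ u)
    (h2 : conn (dropE n s(x₂, y₂)) y₂ u) : False := by
  have hx12 : conn (dropE n s(x₁, y₁)) x₁ x₂ :=
    cU_to_dropE (mem_Uset_of_eventA hA₁) hc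
  have hx21 : conn (dropE n s(x₂, y₂)) x₂ x₁ :=
    cU_to_dropE (mem_Uset_of_eventA hA₂) (connOn_symm hc)
  have key := connOn_closed
    (fun v => conn (dropE n s(x₁, y₁)) y₁ v ∧ conn (dropE n s(x₂, y₂)) y₂ v)
    (connOn_symm h1) ⟨h1, h2⟩ ?_
  · -- key.1 : y₁ is on the y₂-side of e₂
    have hy1y2 : conn (dropE n s(x₂, y₂)) y₂ y₁ := key.1.2
    have hpos : 0 < dropE n s(x₂, y₂) s(x₁, y₁) :=
      dropE_pos.2 ⟨by rw [hA₁.1]; omega, hne⟩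
    have hx2y1 : conn (dropE n s(x₂, y₂)) x₂ y₁ :=
      connOn_trans hx21 (connOn_single (Set.mem_univ _) (Set.mem_univ _) hpos)
    exact eventA_disjoint hA₂ hx2y1 hy1y2
  · rintro a b ⟨ha1, ha2⟩ - - hpos
    rcases dropE_pos.1 hpos with ⟨hpn, hne1⟩
    have hb1 : conn (dropE n s(x₁, y₁)) y₁ b :=
      connOn_trans ha1 (connOn_single (Set.mem_univ _) (Set.mem_univ _) hpos)
    by_cases he2 : s(a, b) = s(x₂, y₂)
    · rcases Sym2.eq_iff.1 he2 with ⟨rfl, rfl⟩ | ⟨rfl, rfl⟩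
      · exact (eventA_disjoint hA₂ conn_refl ha2).elim
      · exact (eventA_disjoint hA₁ hx12 hb1).elim
    · exact ⟨hb1, connOn_trans ha2
        (connOn_single (Set.mem_univ _) (Set.mem_univ _) (dropE_pos.2 ⟨hpn, he2⟩))⟩

end Claim1Aux4

section Claim1Aux5

open scoped Classical

variable {n : Sym2 V → ℕ}

/-- Three distinct cut edges cannot touch a common `𝖴`-avoiding cluster. -/
lemma three_edges_false (hEnds : ∀ z, inInf n z → atMostEnds n z 2)
    {x₁ x₂ x₃ y₁ y₂ y₃ : V}
    (hA₁ : eventA x₁ y₁ n) (hA₂ : eventA x₂ y₂ n) (hA₃ : eventA x₃ y₃ n)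
    (hc₁₂ : conn (offU n) x₁ x₂) (hc₁₃ : conn (offU n) x₁ x₃)
    (hne₁₂ : s(x₁, y₁) ≠ s(x₂, y₂)) (hne₁₃ : s(x₁, y₁) ≠ s(x₃, y₃))
    (hne₂₃ : s(x₂, y₂) ≠ s(x₃, y₃)) : False := by
  have hc₂₃ : conn (offU n) x₂ x₃ := connOn_trans (connOn_symm hc₁₂) hc₁₃
  set S : Finset V := {x₁, x₂, x₃} with hS
  -- the `y`-sides avoid S
  have hYnotS : ∀ {xa ya : V}, eventA xa ya n →
      conn (offU n) xa x₁ → conn (offU n) xa x₂ → conn (offU n) xa x₃ →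
      ∀ u, conn (dropE n s(xa, ya)) ya u → u ∉ (S : Set V) := by
    intro xa ya hA h1 h2 h3 u hu hmemS
    have hxu : conn (dropE n s(xa, ya)) xa u := by
      have hor : u = x₁ ∨ u = x₂ ∨ u = x₃ := by
        simpa [hS] using hmemS
      rcases hor with rfl | rfl | rfl
      · exact cU_to_dropE (mem_Uset_of_eventA hA) h1
      · exact cU_to_dropE (mem_Uset_of_eventA hA) h2
      · exact cU_to_dropE (mem_Uset_of_eventA hA) h3
    exact eventA_disjoint hA hxu hu
  -- the `y`-sides give infinitely many points connected off `S`
  have hInf : ∀ {xa ya : V}, eventA xa ya n →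
      conn (offU n) xa x₁ → conn (offU n) xa x₂ → conn (offU n) xa x₃ →
      {z | connOn n ((S : Set V))ᶜ ya z}.Infinite := by
    intro xa ya hA h1 h2 h3
    refine Set.Infinite.mono ?_ hA.2.2.1
    intro u hu
    have hcl := connOn_closed (fun v => conn (dropE n s(xa, ya)) ya v) hu conn_refl
      (fun a b ha _ _ hpos =>
        connOn_trans ha (connOn_single (Set.mem_univ _) (Set.mem_univ _) hpos))
    refine connOn_mono (fun f hf => (dropE_pos.1 hf).1) ?_ hcl.2
    intro v hv
    exact hYnotS hA h1 h2 h3 v hv.2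
  -- distinct y's
  have hyne : ∀ {xa ya xb yb : V}, eventA xa ya n → eventA xb yb n →
      conn (offU n) xa xb → s(xa, ya) ≠ s(xb, yb) → ya ≠ yb := by
    intro xa ya xb yb hA hB hc hne heq
    exact Y_disjoint hA hB hc hne conn_refl (heq ▸ conn_refl)
  -- no crossing between distinct y-sides avoiding S
  have hNC : ∀ {xa ya xb yb : V}, eventA xa ya n → eventA xb yb n →
      conn (offU n) xa xb → s(xa, ya) ≠ s(xb, yb) → xa ∈ (S : Set V) →
      ¬ connOn n ((S : Set V))ᶜ ya yb := by
    intro xa ya xb yb hA hB hc hne hxaS h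
    have key := connOn_closed (fun v => conn (dropE n s(xa, ya)) ya v) h conn_refl ?_
    · exact Y_disjoint hA hB hc hne key.1 conn_refl
    · intro c d hcP hcS hdS hpos
      by_cases he : s(c, d) = s(xa, ya)
      · rcases Sym2.eq_iff.1 he with ⟨rfl, rfl⟩ | ⟨rfl, rfl⟩
        · exact conn_refl
        · exact absurd hxaS hdS
      · exact connOn_trans hcP
          (connOn_single (Set.mem_univ _) (Set.mem_univ _) (dropE_pos.2 ⟨hpos, he⟩))
  have hy12 : y₁ ≠ y₂ := hyne hA₁ hA₂ hc₁₂ hne₁₂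
  have hy13 : y₁ ≠ y₃ := hyne hA₁ hA₃ hc₁₃ hne₁₃
  have hy23 : y₂ ≠ y₃ := hyne hA₂ hA₃ hc₂₃ hne₂₃
  have hx1S : x₁ ∈ (S : Set V) := by simp [hS]
  have hx2S : x₂ ∈ (S : Set V) := by simp [hS]
  have hx3S : x₃ ∈ (S : Set V) := by simp [hS]
  have hI1 := hInf hA₁ conn_refl hc₁₂ hc₁₃
  have hI2 := hInf hA₂ (connOn_symm hc₁₂) conn_refl hc₂₃
  have hI3 := hInf hA₃ (connOn_symm hc₁₃) (connOn_symm hc₂₃) conn_refl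
  have hN1 := hYnotS hA₁ conn_refl hc₁₂ hc₁₃
  have hN2 := hYnotS hA₂ (connOn_symm hc₁₂) conn_refl hc₂₃
  have hN3 := hYnotS hA₃ (connOn_symm hc₁₃) (connOn_symm hc₂₃) conn_refl
  -- connections in n between the y's
  have hstep : ∀ {xa ya : V}, eventA xa ya n → conn n xa ya := by
    intro xa ya hA
    exact connOn_single (Set.mem_univ _) (Set.mem_univ _) (by rw [hA.1]; omega)
  have hcn12 : conn n y₁ y₂ :=
    connOn_trans (connOn_symm (hstep hA₁))
      (connOn_trans (conn_of_offU hc₁₂) (hstep hA₂))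
  have hcn13 : conn n y₁ y₃ :=
    connOn_trans (connOn_symm (hstep hA₁))
      (connOn_trans (conn_of_offU hc₁₃) (hstep hA₃))
  have hinInf : inInf n y₁ := by
    refine Set.Infinite.mono ?_ hI1
    intro z hz
    exact connOn_mono (fun _ h => h) (fun _ _ => Set.mem_univ _) hz
  set T : Finset V := {y₁, y₂, y₃} with hT
  have hcard := hEnds y₁ hinInf S T ?_ ?_
  · have hT3 : T.card = 3 := by
      rw [hT, Finset.card_insert_of_notMem (by simp [hy12, hy13]),
        Finset.card_insert_of_notMem (by simp [hy23]), Finset.card_singleton]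
    omega
  · intro y hy
    have hor : y = y₁ ∨ y = y₂ ∨ y = y₃ := by simpa [hT] using hy
    rcases hor with rfl | rfl | rfl
    · exact ⟨connOn_refl (Set.mem_univ _), fun hmem => hN1 y conn_refl hmem, hI1⟩
    · exact ⟨hcn12, fun hmem => hN2 y conn_refl hmem, hI2⟩
    · exact ⟨hcn13, fun hmem => hN3 y conn_refl hmem, hI3⟩
  · intro y hy z hz hyz
    have hory : y = y₁ ∨ y = y₂ ∨ y = y₃ := by simpa [hT] using hy
    have horz : z = y₁ ∨ z = y₂ ∨ z = y₃ := by simpa [hT] using hz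
    rcases hory with rfl | rfl | rfl <;> rcases horz with rfl | rfl | rfl
    · exact absurd rfl hyz
    · exact hNC hA₁ hA₂ hc₁₂ hne₁₂ hx1S
    · exact hNC hA₁ hA₃ hc₁₃ hne₁₃ hx1S
    · exact fun h => hNC hA₁ hA₂ hc₁₂ hne₁₂ hx1S (connOn_symm h)
    · exact absurd rfl hyz
    · exact hNC hA₂ hA₃ hc₂₃ hne₂₃ hx2S
    · exact fun h => hNC hA₁ hA₃ hc₁₃ hne₁₃ hx1S (connOn_symm h)
    · exact fun h => hNC hA₂ hA₃ hc₂₃ hne₂₃ hx2S (connOn_symm h)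
    · exact absurd rfl hyz

end Claim1Aux5

section Claim1Aux6

open scoped Classical

variable {n : Sym2 V → ℕ}

/-- There are no three distinct escaping `𝖴`-avoiding clusters. -/
lemma three_clusters_false (hUniq : uniqueInfCluster n)
    (hEnds : ∀ z, inInf n z → atMostEnds n z 2)
    {x₁ x₂ x₃ : V} (he₁ : endy n x₁) (he₂ : endy n x₂) (he₃ : endy n x₃)
    (hn₁₂ : ¬ conn (offU n) x₁ x₂) (hn₁₃ : ¬ conn (offU n) x₁ x₃)
    (hn₂₃ : ¬ conn (offU n) x₂ x₃) : False := by
  have hi₁ := inInf_of_endy he₁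
  have hi₂ := inInf_of_endy he₂
  have hi₃ := inInf_of_endy he₃
  have hc12 : conn n x₁ x₂ := hUniq x₁ x₂ hi₁ hi₂
  have hc13 : conn n x₁ x₃ := hUniq x₁ x₃ hi₁ hi₃
  have hc23 : conn n x₂ x₃ := hUniq x₂ x₃ hi₂ hi₃
  obtain ⟨a₁₂, b₁₂, hA₁₂, hsa₁₂, hsb₁₂⟩ := exists_separating_cut hc12 hn₁₂
  obtain ⟨a₁₃, b₁₃, hA₁₃, hsa₁₃, hsb₁₃⟩ := exists_separating_cut hc13 hn₁₃
  obtain ⟨a₂₃, b₂₃, hA₂₃, hsa₂₃, hsb₂₃⟩ := exists_separating_cut hc23 hn₂₃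
  set S : Finset V := {a₁₂, b₁₂, a₁₃, b₁₃, a₂₃, b₂₃} with hS
  obtain ⟨w₁, hw₁, hIw₁⟩ := he₁ S
  obtain ⟨w₂, hw₂, hIw₂⟩ := he₂ S
  obtain ⟨w₃, hw₃, hIw₃⟩ := he₃ S
  have hwne : ∀ {xa xb wa wb : V}, conn (offU n) xa wa → conn (offU n) xb wb →
      ¬ conn (offU n) xa xb → wa ≠ wb := by
    intro xa xb wa wb ha hb hn h
    exact hn (connOn_trans ha (h ▸ connOn_symm hb))
  have hw12 : w₁ ≠ w₂ := hwne hw₁ hw₂ hn₁₂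
  have hw13 : w₁ ≠ w₃ := hwne hw₁ hw₃ hn₁₃
  have hw23 : w₂ ≠ w₃ := hwne hw₂ hw₃ hn₂₃
  have hNC : ∀ {a b wa wb : V}, eventA a b n →
      conn (dropE n s(a, b)) a wa → conn (dropE n s(a, b)) b wb →
      a ∈ (S : Set V) → b ∈ (S : Set V) →
      ¬ connOn n ((S : Set V))ᶜ wa wb := by
    intro a b wa wb hA hsa hsb haS hbS h
    have key := connOn_closed (fun v => conn (dropE n s(a, b)) a v) h hsa ?_
    · exact eventA_disjoint hA key.1 hsb
    · intro c d hcP hcS hdS hpos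
      by_cases he : s(c, d) = s(a, b)
      · rcases Sym2.eq_iff.1 he with ⟨rfl, rfl⟩ | ⟨rfl, rfl⟩
        · exact absurd hbS hdS
        · exact absurd haS hdS
      · exact connOn_trans hcP
          (connOn_single (Set.mem_univ _) (Set.mem_univ _) (dropE_pos.2 ⟨hpos, he⟩))
  have hwa12 : conn (dropE n s(a₁₂, b₁₂)) a₁₂ w₁ :=
    connOn_trans hsa₁₂ (cU_to_dropE (mem_Uset_of_eventA hA₁₂) hw₁)
  have hwb12 : conn (dropE n s(a₁₂, b₁₂)) b₁₂ w₂ :=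
    connOn_trans hsb₁₂ (cU_to_dropE (mem_Uset_of_eventA hA₁₂) hw₂)
  have hwa13 : conn (dropE n s(a₁₃, b₁₃)) a₁₃ w₁ :=
    connOn_trans hsa₁₃ (cU_to_dropE (mem_Uset_of_eventA hA₁₃) hw₁)
  have hwb13 : conn (dropE n s(a₁₃, b₁₃)) b₁₃ w₃ :=
    connOn_trans hsb₁₃ (cU_to_dropE (mem_Uset_of_eventA hA₁₃) hw₃)
  have hwa23 : conn (dropE n s(a₂₃, b₂₃)) a₂₃ w₂ :=
    connOn_trans hsa₂₃ (cU_to_dropE (mem_Uset_of_eventA hA₂₃) hw₂)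
  have hwb23 : conn (dropE n s(a₂₃, b₂₃)) b₂₃ w₃ :=
    connOn_trans hsb₂₃ (cU_to_dropE (mem_Uset_of_eventA hA₂₃) hw₃)
  have hIm : ∀ {w : V}, {u | connOn (offU n) ((S : Set V))ᶜ w u}.Infinite →
      {z | connOn n ((S : Set V))ᶜ w z}.Infinite := by
    intro w h
    refine Set.Infinite.mono ?_ h
    intro u hu
    exact connOn_mono (fun f hf => (offU_pos.1 hf).1) (fun _ h => h) hu
  have hwS : ∀ {w : V}, {u | connOn (offU n) ((S : Set V))ᶜ w u}.Infinite →
      w ∉ S := by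
    intro w hinf hw
    obtain ⟨u, hu⟩ := hinf.nonempty
    exact (connOn_left_mem hu) hw
  have hcnw : ∀ {xa xb wa wb : V}, conn (offU n) xa wa → conn (offU n) xb wb →
      conn n xa xb → conn n wa wb := by
    intro xa xb wa wb ha hb hc
    exact connOn_trans (connOn_symm (conn_of_offU ha))
      (connOn_trans hc (conn_of_offU hb))
  have hinInf : inInf n w₁ := by
    refine Set.Infinite.mono ?_ (hIm hIw₁)
    intro z hz
    exact connOn_mono (fun _ h => h) (fun _ _ => Set.mem_univ _) hz
  set T : Finset V := {w₁, w₂, w₃} with hT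
  have hcard := hEnds w₁ hinInf S T ?_ ?_
  · have hT3 : T.card = 3 := by
      rw [hT, Finset.card_insert_of_notMem (by simp [hw12, hw13]),
        Finset.card_insert_of_notMem (by simp [hw23]), Finset.card_singleton]
    omega
  · intro y hy
    have hor : y = w₁ ∨ y = w₂ ∨ y = w₃ := by simpa [hT] using hy
    rcases hor with rfl | rfl | rfl
    · exact ⟨connOn_refl (Set.mem_univ _), hwS hIw₁, hIm hIw₁⟩
    · exact ⟨hcnw hw₁ hw₂ hc12, hwS hIw₂, hIm hIw₂⟩
    · exact ⟨hcnw hw₁ hw₃ hc13, hwS hIw₃, hIm hIw₃⟩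
  · intro y hy z hz hyz
    have hory : y = w₁ ∨ y = w₂ ∨ y = w₃ := by simpa [hT] using hy
    have horz : z = w₁ ∨ z = w₂ ∨ z = w₃ := by simpa [hT] using hz
    have m1 : a₁₂ ∈ (S : Set V) := by simp [hS]
    have m2 : b₁₂ ∈ (S : Set V) := by simp [hS]
    have m3 : a₁₃ ∈ (S : Set V) := by simp [hS]
    have m4 : b₁₃ ∈ (S : Set V) := by simp [hS]
    have m5 : a₂₃ ∈ (S : Set V) := by simp [hS]
    have m6 : b₂₃ ∈ (S : Set V) := by simp [hS]
    rcases hory with rfl | rfl | rfl <;> rcases horz with rfl | rfl | rfl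
    · exact absurd rfl hyz
    · exact hNC hA₁₂ hwa12 hwb12 m1 m2
    · exact hNC hA₁₃ hwa13 hwb13 m3 m4
    · exact fun h => hNC hA₁₂ hwa12 hwb12 m1 m2 (connOn_symm h)
    · exact absurd rfl hyz
    · exact hNC hA₂₃ hwa23 hwb23 m5 m6
    · exact fun h => hNC hA₁₃ hwa13 hwb13 m3 m4 (connOn_symm h)
    · exact fun h => hNC hA₂₃ hwa23 hwb23 m5 m6 (connOn_symm h)
    · exact absurd rfl hyz

end Claim1Aux6

section Claim1Aux7

open scoped Classical

variable {n : Sym2 V → ℕ} {x : V}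

lemma FsetU_nonempty (hUne : (Uset n).Nonempty) (hUniq : uniqueInfCluster n)
    (hx : endy n x) : (FsetU n).Nonempty := by
  obtain ⟨e, he⟩ := hUne
  obtain ⟨x₀, y₀, rfl, hA⟩ := he
  have hix : inInf n x := inInf_of_endy hx
  have hix₀ : inInf n x₀ := by
    refine Set.Infinite.mono ?_ hA.2.1
    intro u hu
    exact connOn_mono (fun f hf => (dropE_pos.1 hf).1) (fun _ h => h) hu
  obtain ⟨l, hh, hl, hc, -⟩ := hUniq x x₀ hix hix₀
  by_cases h0 : ecount (Uset n) l = 0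
  · have hcu : conn (offU n) x x₀ := cu_of_ecount_zero h0 hh hl hc
    exact ⟨x₀, endy_congr hx hcu, y₀, mem_Uset_of_eventA hA⟩
  · obtain ⟨l₁, a, b, l₂, rfl, hpre0, habU, -⟩ := exists_first_cross (Uset n) l h0
    have hph : (l₁ ++ [a]).head? = some x := by
      simp only [List.head?_append, List.head?_cons] at hh ⊢
      exact hh
    have hpla : (l₁ ++ [a]).getLast? = some a := by
      rw [List.getLast?_append_cons]; rfl
    have hassoc : l₁ ++ a :: b :: l₂ = (l₁ ++ [a]) ++ b :: l₂ := by simp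
    rw [hassoc] at hc
    obtain ⟨hcpre, -, -⟩ := List.isChain_append.1 hc
    have hcu : conn (offU n) x a := cu_of_ecount_zero hpre0 hph hpla hcpre
    exact ⟨a, endy_congr hx hcu, b, habU⟩

lemma FsetU_card_bound (hUniq : uniqueInfCluster n)
    (hEnds : ∀ z, inInf n z → atMostEnds n z 2) :
    ∀ t : Finset V, ↑t ⊆ FsetU n → t.card ≤ 4 := by
  intro t ht
  by_contra hcard
  push_neg at hcard
  obtain ⟨t', ht', hc5⟩ := Finset.exists_subset_card_eq (show 5 ≤ t.card from hcard)
  let f := (t'.equivFinOfCardEq hc5).symm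
  have hmem : ∀ i : Fin 5, ((f i : V) ∈ FsetU n) :=
    fun i => ht (Finset.mem_coe.2 (ht' (f i).2))
  have hinj : ∀ i j : Fin 5, i ≠ j → (f i : V) ≠ (f j : V) := by
    intro i j hij h
    exact hij (f.injective (Subtype.ext h))
  have caseA : ∀ u v w : V, u ∈ FsetU n → v ∈ FsetU n → w ∈ FsetU n →
      u ≠ v → u ≠ w → v ≠ w →
      conn (offU n) u v → conn (offU n) u w → False := by
    intro u v w hu hv hw huv huw hvw hcv hcw
    obtain ⟨-, yu, hyu⟩ := hu
    obtain ⟨-, yv, hyv⟩ := hv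
    obtain ⟨-, yw, hyw⟩ := hw
    have hAu : eventA u yu n := eventA_of_mem_Uset hyu u yu rfl
    have hAv : eventA v yv n := eventA_of_mem_Uset hyv v yv rfl
    have hAw : eventA w yw n := eventA_of_mem_Uset hyw w yw rfl
    have hedge : ∀ {p q yp yq : V}, eventA p yp n → p ≠ q →
        conn (offU n) p q → s(p, yp) ≠ s(q, yq) := by
      intro p q yp yq hAp hpq hc h
      rcases Sym2.eq_iff.1 h with ⟨h1, h2⟩ | ⟨h1, h2⟩
      · exact hpq h1
      · subst h2
        exact hAp.2.2.2 (cU_to_dropE (mem_Uset_of_eventA hAp) hc)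
    exact three_edges_false hEnds hAu hAv hAw hcv hcw
      (hedge hAu huv hcv) (hedge hAu huw hcw)
      (hedge hAv hvw (connOn_trans (connOn_symm hcv) hcw))
  have caseB : ∀ u v w : V, u ∈ FsetU n → v ∈ FsetU n → w ∈ FsetU n →
      ¬ conn (offU n) u v → ¬ conn (offU n) u w → ¬ conn (offU n) v w → False := by
    intro u v w hu hv hw h1 h2 h3
    exact three_clusters_false hUniq hEnds hu.1 hv.1 hw.1 h1 h2 h3
  set X : Fin 5 → V := fun i => (f i : V) with hX
  have notTwo : ∀ i j : Fin 5, (0 : Fin 5) ≠ i → (0 : Fin 5) ≠ j → i ≠ j →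
      conn (offU n) (X 0) (X i) → conn (offU n) (X 0) (X j) → False := by
    intro i j h0i h0j hij hci hcj
    exact caseA (X 0) (X i) (X j) (hmem 0) (hmem i) (hmem j)
      (hinj _ _ h0i) (hinj _ _ h0j) (hinj _ _ hij) hci hcj
  have finish3 : ∀ i j k : Fin 5, (0 : Fin 5) ≠ i → (0 : Fin 5) ≠ j →
      (0 : Fin 5) ≠ k → i ≠ j → i ≠ k → j ≠ k →
      ¬ conn (offU n) (X 0) (X i) → ¬ conn (offU n) (X 0) (X j) →
      ¬ conn (offU n) (X 0) (X k) → False := by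
    intro i j k h0i h0j h0k hij hik hjk hni hnj hnk
    by_cases hcij : conn (offU n) (X i) (X j)
    · by_cases hcik : conn (offU n) (X i) (X k)
      · exact caseA (X i) (X j) (X k) (hmem i) (hmem j) (hmem k)
          (hinj _ _ hij) (hinj _ _ hik) (hinj _ _ hjk) hcij hcik
      · exact caseB (X 0) (X i) (X k) (hmem 0) (hmem i) (hmem k) hni hnk hcik
    · exact caseB (X 0) (X i) (X j) (hmem 0) (hmem i) (hmem j) hni hnj hcij
  by_cases h1 : conn (offU n) (X 0) (X 1) <;>
    by_cases h2 : conn (offU n) (X 0) (X 2) <;>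
    by_cases h3 : conn (offU n) (X 0) (X 3) <;>
    by_cases h4 : conn (offU n) (X 0) (X 4) <;>
    first
      | exact notTwo 1 2 (by decide) (by decide) (by decide) h1 h2
      | exact notTwo 1 3 (by decide) (by decide) (by decide) h1 h3
      | exact notTwo 1 4 (by decide) (by decide) (by decide) h1 h4
      | exact notTwo 2 3 (by decide) (by decide) (by decide) h2 h3
      | exact notTwo 2 4 (by decide) (by decide) (by decide) h2 h4
      | exact notTwo 3 4 (by decide) (by decide) (by decide) h3 h4
      | exact finish3 2 3 4 (by decide) (by decide) (by decide) (by decide)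
          (by decide) (by decide) h2 h3 h4
      | exact finish3 1 3 4 (by decide) (by decide) (by decide) (by decide)
          (by decide) (by decide) h1 h3 h4
      | exact finish3 1 2 4 (by decide) (by decide) (by decide) (by decide)
          (by decide) (by decide) h1 h2 h4
      | exact finish3 1 2 3 (by decide) (by decide) (by decide) (by decide)
          (by decide) (by decide) h1 h2 h3

end Claim1Aux7

lemma perm_apply_inv_self' (φ : Equiv.Perm V) (v : V) : φ (φ⁻¹ v) = v := φ.apply_symm_apply v

lemma perm_inv_apply_self' (φ : Equiv.Perm V) (v : V) : φ⁻¹ (φ v) = v := φ.symm_apply_apply v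

section Claim1Aux8

open scoped Classical

variable {n m : Sym2 V → ℕ} {S : Set V} {x y : V} {φ : Equiv.Perm V}

lemma curShift_pair (φ : Equiv.Perm V) (x y : V) :
    curShift φ n s(x, y) = n s(φ x, φ y) := by
  unfold curShift
  rw [Sym2.map_pair_eq]

lemma curShift_inv_cancel (φ : Equiv.Perm V) (m : Sym2 V → ℕ) :
    curShift φ⁻¹ (curShift φ m) = m := by
  funext e
  unfold curShift
  rw [Sym2.map_map]
  have hid : ((φ : V → V) ∘ ((φ⁻¹ : Equiv.Perm V) : V → V)) = id := by
    funext v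
    exact perm_apply_inv_self' φ v
  rw [hid, Sym2.map_id]
  rfl

lemma connOn_shift_fwd (φ : Equiv.Perm V) (h : connOn (curShift φ m) S x y) :
    connOn m (φ '' S) (φ x) (φ y) := by
  obtain ⟨l, hh, hl, hc, hm⟩ := h
  refine ⟨l.map φ, ?_, ?_, ?_, ?_⟩
  · rw [List.head?_map, hh]; rfl
  · rw [List.getLast?_map, hl]; rfl
  · show List.IsChain _ _
    rw [List.isChain_map]
    refine hc.imp fun a b hab => ?_
    rwa [curShift_pair] at hab
  · intro v hv
    obtain ⟨u, hu, rfl⟩ := List.mem_map.1 hv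
    exact ⟨u, hm u hu, rfl⟩

lemma connOn_shift (φ : Equiv.Perm V) :
    connOn (curShift φ m) S x y ↔ connOn m (φ '' S) (φ x) (φ y) := by
  constructor
  · exact connOn_shift_fwd φ
  · intro h
    rw [← curShift_inv_cancel φ m] at h
    have h2 := connOn_shift_fwd φ⁻¹ h
    simpa [Set.image_image] using h2

lemma conn_shift (φ : Equiv.Perm V) :
    conn (curShift φ m) x y ↔ conn m (φ x) (φ y) := by
  unfold conn
  rw [connOn_shift φ]
  have : (φ : V → V) '' Set.univ = Set.univ := by
    simp [Set.image_univ, φ.surjective.range_eq]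
  rw [this]

lemma dropE_shift (φ : Equiv.Perm V) (x y : V) :
    dropE (curShift φ n) s(x, y) = curShift φ (dropE n s(φ x, φ y)) := by
  funext e
  show (if e = s(x, y) then 0 else curShift φ n e)
    = dropE n s(φ x, φ y) (Sym2.map φ e)
  unfold dropE
  have hiff : e = s(x, y) ↔ Sym2.map φ e = s(φ x, φ y) := by
    constructor
    · rintro rfl; exact Sym2.map_pair_eq φ x y
    · intro h
      have := congrArg (Sym2.map (φ⁻¹ : Equiv.Perm V)) h
      rwa [Sym2.map_map, Sym2.map_pair_eq,
        (by funext v; exact perm_inv_apply_self' φ v :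
          ((φ⁻¹ : Equiv.Perm V) : V → V) ∘ (φ : V → V) = id),
        Sym2.map_id, perm_inv_apply_self' φ, perm_inv_apply_self' φ] at this
  split_ifs with h1 h2 h3
  · rfl
  · exact absurd (hiff.1 h1) h2
  · exact absurd (hiff.2 h3) h1
  · rfl

lemma inInf_shift (φ : Equiv.Perm V) :
    inInf (curShift φ m) x ↔ inInf m (φ x) := by
  have hset : cluster (curShift φ m) x = (φ : V → V) ⁻¹' cluster m (φ x) := by
    ext u
    exact conn_shift φ
  unfold inInf
  rw [hset]
  constructor
  · intro h
    refine Set.Infinite.mono ?_ (h.image φ.injective.injOn)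
    intro u hu
    obtain ⟨w, hw, rfl⟩ := hu
    exact hw
  · intro h
    refine Set.Infinite.mono ?_ (h.image φ⁻¹.injective.injOn)
    rintro u ⟨w, hw, rfl⟩
    show conn m (φ x) (φ (φ⁻¹ w))
    rwa [perm_apply_inv_self' φ]

lemma eventA_shift (φ : Equiv.Perm V) :
    eventA x y (curShift φ n) ↔ eventA (φ x) (φ y) n := by
  unfold eventA
  rw [curShift_pair, dropE_shift, inInf_shift, inInf_shift, conn_shift]

lemma Uset_shift {e : Sym2 V} (φ : Equiv.Perm V) :
    e ∈ Uset (curShift φ n) ↔ Sym2.map φ e ∈ Uset n := by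
  constructor
  · rintro ⟨a, b, rfl, hA⟩
    exact ⟨φ a, φ b, Sym2.map_pair_eq φ a b, (eventA_shift φ).1 hA⟩
  · rintro ⟨a, b, hab, hA⟩
    refine ⟨φ⁻¹ a, φ⁻¹ b, ?_, ?_⟩
    · have := congrArg (Sym2.map (φ⁻¹ : Equiv.Perm V)) hab
      rwa [Sym2.map_map, Sym2.map_pair_eq,
        (by funext v; exact perm_inv_apply_self' φ v :
          ((φ⁻¹ : Equiv.Perm V) : V → V) ∘ (φ : V → V) = id),
        Sym2.map_id] at this
    · rw [eventA_shift φ, perm_apply_inv_self' φ, perm_apply_inv_self' φ]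
      exact hA

lemma offU_shift (φ : Equiv.Perm V) :
    offU (curShift φ n) = curShift φ (offU n) := by
  funext e
  show (if e ∈ Uset (curShift φ n) then 0 else curShift φ n e)
    = offU n (Sym2.map φ e)
  unfold offU
  split_ifs with h1 h2 h3
  · rfl
  · exact absurd ((Uset_shift φ).1 h1) h2
  · exact absurd ((Uset_shift φ).2 h3) h1
  · rfl

lemma endy_shift_fwd (φ : Equiv.Perm V) (h : endy (curShift φ m) x) :
    endy m (φ x) := by
  intro S
  obtain ⟨w, hw, hinf⟩ := h (S.image (φ⁻¹ : Equiv.Perm V))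
  rw [offU_shift] at hw hinf
  refine ⟨φ w, by rwa [conn_shift] at hw, ?_⟩
  refine Set.Infinite.mono ?_ (hinf.image φ.injective.injOn)
  rintro u ⟨w', hw', rfl⟩
  have h2 := connOn_shift_fwd φ hw'
  refine connOn_mono (fun f hf => hf) ?_ h2
  rintro v ⟨v', hv', rfl⟩
  intro hmem
  have h3 : φ⁻¹ (φ v') ∈ S.image (φ⁻¹ : Equiv.Perm V) :=
    Finset.mem_image_of_mem _ (by simpa using hmem)
  rw [perm_inv_apply_self' φ] at h3
  exact hv' (Finset.mem_coe.2 h3)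

lemma endy_shift (φ : Equiv.Perm V) :
    endy (curShift φ m) x ↔ endy m (φ x) := by
  constructor
  · exact endy_shift_fwd φ
  · intro h
    have h' : endy (curShift φ⁻¹ (curShift φ m)) (φ x) := by
      rwa [curShift_inv_cancel]
    have := endy_shift_fwd φ⁻¹ h'
    rwa [perm_inv_apply_self' φ] at this

lemma FsetU_shift (φ : Equiv.Perm V) :
    x ∈ FsetU (curShift φ n) ↔ φ x ∈ FsetU n := by
  unfold FsetU
  simp only [Set.mem_setOf_eq]
  rw [endy_shift]
  constructor
  · rintro ⟨h1, y, hy⟩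
    refine ⟨h1, φ y, ?_⟩
    have := (Uset_shift φ).1 hy
    rwa [Sym2.map_pair_eq] at this
  · rintro ⟨h1, y, hy⟩
    refine ⟨h1, φ⁻¹ y, (Uset_shift φ).2 ?_⟩
    rwa [Sym2.map_pair_eq, perm_apply_inv_self' φ]

end Claim1Aux8

section Claim1Aux9

open scoped Classical

variable [Countable V] {n m : Sym2 V → ℕ} {x y : V}

lemma meas_coord_pos (e : Sym2 V) :
    MeasurableSet {m : Sym2 V → ℕ | 0 < m e} :=
  measurable_pi_apply e ((Set.to_countable {k : ℕ | 0 < k}).measurableSet)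

lemma meas_coord_eq (e : Sym2 V) (k : ℕ) :
    MeasurableSet {m : Sym2 V → ℕ | m e = k} := by
  have h : {m : Sym2 V → ℕ | m e = k} = (fun m : Sym2 V → ℕ => m e) ⁻¹' {k} := by
    ext m; simp
  rw [h]
  exact measurable_pi_apply e (measurableSet_singleton k)

lemma meas_chain (R : (Sym2 V → ℕ) → V → V → Prop)
    (hR : ∀ u v, MeasurableSet {m | R m u v}) :
    ∀ l : List V, MeasurableSet {m | List.Chain' (R m) l} := by
  intro l
  induction l with
  | nil =>
    have h : {m : Sym2 V → ℕ | List.Chain' (R m) []} = Set.univ := by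
      ext m; simp [List.Chain']
    rw [h]; exact MeasurableSet.univ
  | cons a t ih =>
    cases t with
    | nil =>
      have h : {m : Sym2 V → ℕ | List.Chain' (R m) [a]} = Set.univ := by
        ext m; simp [List.Chain']
      rw [h]; exact MeasurableSet.univ
    | cons b t' =>
      have h : {m | List.Chain' (R m) (a :: b :: t')} =
          {m | R m a b} ∩ {m | List.Chain' (R m) (b :: t')} := by
        ext m; simp [List.Chain', List.isChain_cons_cons]
      rw [h]; exact (hR a b).inter ih

lemma meas_connOn (S : Set V) (x y : V) :
    MeasurableSet {m : Sym2 V → ℕ | connOn m S x y} := by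
  have h : {m : Sym2 V → ℕ | connOn m S x y} =
      ⋃ (l : List V) (_ : l.head? = some x ∧ l.getLast? = some y ∧ ∀ v ∈ l, v ∈ S),
        {m | List.Chain' (fun u v => 0 < m s(u, v)) l} := by
    ext m
    simp only [Set.mem_iUnion, Set.mem_setOf_eq]
    constructor
    · rintro ⟨l, h1, h2, h3, h4⟩; exact ⟨l, ⟨h1, h2, h4⟩, h3⟩
    · rintro ⟨l, ⟨h1, h2, h4⟩, h3⟩; exact ⟨l, h1, h2, h3, h4⟩
  rw [h]
  exact MeasurableSet.iUnion fun l => MeasurableSet.iUnion fun _ =>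
    meas_chain _ (fun u v => meas_coord_pos s(u, v)) l

lemma measurable_dropE (e : Sym2 V) :
    Measurable (fun n : Sym2 V → ℕ => dropE n e) := by
  apply measurable_pi_lambda
  intro f
  by_cases h : f = e
  · have h2 : (fun n : Sym2 V → ℕ => dropE n e f) = fun _ => 0 := by
      funext n; simp [dropE, h]
    rw [h2]; exact measurable_const
  · have h2 : (fun n : Sym2 V → ℕ => dropE n e f) = fun n => n f := by
      funext n; simp [dropE, h]
    rw [h2]; exact measurable_pi_apply f

lemma set_infinite_iff {s : Set V} :
    s.Infinite ↔ ∀ F : Finset V, ∃ u ∈ s, u ∉ F := by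
  constructor
  · intro h F; exact h.exists_notMem_finset F
  · intro h hfin
    obtain ⟨u, hu, hnot⟩ := h hfin.toFinset
    exact hnot (hfin.mem_toFinset.2 hu)

lemma meas_infinite (Q : (Sym2 V → ℕ) → V → Prop)
    (hQ : ∀ u, MeasurableSet {m | Q m u}) :
    MeasurableSet {m | {u | Q m u}.Infinite} := by
  have h : {m | {u | Q m u}.Infinite} =
      ⋂ (F : Finset V), ⋃ (u : V) (_ : u ∉ F), {m | Q m u} := by
    ext m
    simp only [Set.mem_setOf_eq, Set.mem_iInter, Set.mem_iUnion]
    rw [set_infinite_iff]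
    constructor
    · intro h F; obtain ⟨u, h1, h2⟩ := h F; exact ⟨u, h2, h1⟩
    · intro h F; obtain ⟨u, h2, h1⟩ := h F; exact ⟨u, h1, h2⟩
  rw [h]
  exact MeasurableSet.iInter fun F => MeasurableSet.iUnion fun u =>
    MeasurableSet.iUnion fun _ => hQ u

lemma meas_inInf (x : V) : MeasurableSet {m : Sym2 V → ℕ | inInf m x} :=
  meas_infinite (fun m u => conn m x u) (fun u => meas_connOn _ _ _)

lemma meas_eventA (x y : V) : MeasurableSet {n : Sym2 V → ℕ | eventA x y n} := by
  have h : {n : Sym2 V → ℕ | eventA x y n} =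
      {n : Sym2 V → ℕ | n s(x, y) = 1} ∩
      (((fun n : Sym2 V → ℕ => dropE n s(x, y)) ⁻¹' {m | inInf m x}) ∩
      (((fun n : Sym2 V → ℕ => dropE n s(x, y)) ⁻¹' {m | inInf m y}) ∩
      ((fun n : Sym2 V → ℕ => dropE n s(x, y)) ⁻¹' {m | conn m x y})ᶜ)) := by
    ext n
    simp only [Set.mem_inter_iff, Set.mem_preimage, Set.mem_setOf_eq,
      Set.mem_compl_iff]
    exact Iff.rfl
  rw [h]
  exact (meas_coord_eq _ 1).inter ((measurable_dropE _ (meas_inInf x)).inter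
    ((measurable_dropE _ (meas_inInf y)).inter
      (measurable_dropE _ (meas_connOn _ _ _)).compl))

lemma meas_mem_Uset (e : Sym2 V) :
    MeasurableSet {n : Sym2 V → ℕ | e ∈ Uset n} := by
  have h : {n : Sym2 V → ℕ | e ∈ Uset n} =
      ⋃ (p : V × V) (_ : e = s(p.1, p.2)), {n | eventA p.1 p.2 n} := by
    ext n
    simp only [Set.mem_iUnion, Set.mem_setOf_eq]
    constructor
    · rintro ⟨a, b, h1, h2⟩; exact ⟨(a, b), h1, h2⟩
    · rintro ⟨⟨a, b⟩, h1, h2⟩; exact ⟨a, b, h1, h2⟩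
  rw [h]
  exact MeasurableSet.iUnion fun p => MeasurableSet.iUnion fun _ =>
    meas_eventA p.1 p.2

lemma measurable_offU : Measurable (offU : (Sym2 V → ℕ) → Sym2 V → ℕ) := by
  apply measurable_pi_lambda
  intro e
  have h : (fun n : Sym2 V → ℕ => offU n e) =
      fun n => if e ∈ Uset n then 0 else n e := rfl
  rw [h]
  exact Measurable.ite (meas_mem_Uset e) measurable_const (measurable_pi_apply e)

lemma measurable_curShift (φ : Equiv.Perm V) : Measurable (curShift φ) := by
  apply measurable_pi_lambda
  intro e
  exact measurable_pi_apply (Sym2.map φ e)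

lemma meas_endy (x : V) : MeasurableSet {n : Sym2 V → ℕ | endy n x} := by
  have h : {n : Sym2 V → ℕ | endy n x} =
      ⋂ (S : Finset V), ⋃ (w : V),
        ((offU ⁻¹' {m | conn m x w}) ∩
          (offU ⁻¹' {m | {u | connOn m ((S : Set V))ᶜ w u}.Infinite})) := by
    ext n
    simp only [Set.mem_iInter, Set.mem_iUnion, Set.mem_inter_iff,
      Set.mem_preimage, Set.mem_setOf_eq]
    exact Iff.rfl
  rw [h]
  exact MeasurableSet.iInter fun S => MeasurableSet.iUnion fun w =>
    (measurable_offU (meas_connOn _ _ _)).inter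
      (measurable_offU (meas_infinite (fun m u => connOn m ((S : Set V))ᶜ w u)
        (fun u => meas_connOn _ _ _)))

lemma meas_mem_FsetU (x : V) : MeasurableSet {n : Sym2 V → ℕ | x ∈ FsetU n} := by
  have h : {n : Sym2 V → ℕ | x ∈ FsetU n} =
      {n | endy n x} ∩ ⋃ y : V, {n | s(x, y) ∈ Uset n} := by
    ext n
    simp only [Set.mem_inter_iff, Set.mem_iUnion, Set.mem_setOf_eq]
    exact Iff.rfl
  rw [h]
  exact (meas_endy x).inter (MeasurableSet.iUnion fun y => meas_mem_Uset _)

lemma meas_bound :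
    MeasurableSet {n : Sym2 V → ℕ | ∀ t : Finset V, ↑t ⊆ FsetU n → t.card ≤ 4} := by
  have h : {n : Sym2 V → ℕ | ∀ t : Finset V, ↑t ⊆ FsetU n → t.card ≤ 4} =
      ⋂ (t : Finset V) (_ : ¬ t.card ≤ 4),
        (⋂ (v : V) (_ : v ∈ t), {n | v ∈ FsetU n})ᶜ := by
    ext n
    constructor
    · intro hall
      refine Set.mem_iInter₂.2 fun t ht hsub => ?_
      exact ht (hall t fun v hv => Set.mem_iInter₂.1 hsub v (Finset.mem_coe.1 hv))
    · intro h t hsub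
      by_contra hc
      exact Set.mem_iInter₂.1 h t hc
        (Set.mem_iInter₂.2 fun v hv => hsub (Finset.mem_coe.2 hv))
  rw [h]
  exact MeasurableSet.iInter fun t => MeasurableSet.iInter fun _ =>
    (MeasurableSet.iInter fun v => MeasurableSet.iInter fun _ =>
      meas_mem_FsetU v).compl

end Claim1Aux9

section Claim1Aux10

variable {n : Sym2 V → ℕ}

lemma sym2_map_inv_cancel (φ : Equiv.Perm V) (e : Sym2 V) :
    Sym2.map (φ : V → V) (Sym2.map ((φ⁻¹ : Equiv.Perm V) : V → V) e) = e := by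
  rw [Sym2.map_map]
  have hid : ((φ : V → V) ∘ ((φ⁻¹ : Equiv.Perm V) : V → V)) = id := by
    funext v
    exact perm_apply_inv_self' φ v
  rw [hid, Sym2.map_id]
  rfl

end Claim1Aux10

/-- Claim 1 of Lemma 3.2: a.s. every one-sided infinite self-avoiding path in the
multigraph of the current contains a consecutive pair belonging to `𝖴(n)`. -/
theorem statement11
    {V : Type*} [DecidableEq V] [Countable V] [Infinite V]
    (G : SimpleGraph V) (hlf : G.LocallyFinite)
    (Γ : Subgroup (Equiv.Perm V))
    (hAut : ∀ φ ∈ Γ, ∀ x y : V, G.Adj (φ x) (φ y) ↔ G.Adj x y)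
    (hTrans : ∀ x y : V, ∃ φ ∈ Γ, φ x = y)
    (P : Measure (Sym2 V → ℕ)) (hprob : IsProbabilityMeasure P)
    (hinv : curInvariant Γ P) (herg : curErgodic Γ P)
    (hU : 0 < P {n | (Uset n).Nonempty})
    (hgeo : ∀ᵐ n ∂P, (∃ x, inInf n x) ∧ uniqueInfCluster n ∧
      ∀ x, inInf n x → atMostEnds n x 2) :
    ∀ᵐ n ∂P, ∀ v : ℕ → V, Function.Injective v →
      (∀ j, 0 < n s(v j, v (j + 1))) → ∃ i, s(v i, v (i + 1)) ∈ Uset n := by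
  classical
  haveI := hprob
  have hBmeas : ∀ x : V, MeasurableSet
      {n : Sym2 V → ℕ | x ∈ FsetU n ∧ ∀ t : Finset V, ↑t ⊆ FsetU n → t.card ≤ 4} :=
    fun x => (meas_mem_FsetU x).inter meas_bound
  set B : V → Set (Sym2 V → ℕ) := fun x =>
    {n | x ∈ FsetU n ∧ ∀ t : Finset V, ↑t ⊆ FsetU n → t.card ≤ 4} with hB
  have hBshift : ∀ (φ : Equiv.Perm V) (x : V), curShift φ ⁻¹' B x = B (φ x) := by
    intro φ x
    ext n
    simp only [hB, Set.mem_preimage, Set.mem_setOf_eq]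
    constructor
    · rintro ⟨h1, h2⟩
      refine ⟨(FsetU_shift φ).1 h1, ?_⟩
      intro t ht
      have ht' : ↑(t.image (φ⁻¹ : Equiv.Perm V)) ⊆ FsetU (curShift φ n) := by
        intro w hw
        obtain ⟨u, hu, rfl⟩ := Finset.mem_image.1 (Finset.mem_coe.1 hw)
        refine (FsetU_shift φ).2 ?_
        rw [perm_apply_inv_self' φ]
        exact ht (Finset.mem_coe.2 hu)
      have hcard := h2 _ ht'
      rwa [Finset.card_image_of_injective _ (Equiv.injective _)] at hcard
    · rintro ⟨h1, h2⟩
      refine ⟨(FsetU_shift φ).2 h1, ?_⟩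
      intro t ht
      have ht' : ↑(t.image (φ : Equiv.Perm V)) ⊆ FsetU n := by
        intro w hw
        obtain ⟨u, hu, rfl⟩ := Finset.mem_image.1 (Finset.mem_coe.1 hw)
        exact (FsetU_shift φ).1 (ht (Finset.mem_coe.2 hu))
      have hcard := h2 _ ht'
      rwa [Finset.card_image_of_injective _ (Equiv.injective _)] at hcard
  have hPB : ∀ x y : V, P (B x) = P (B y) := by
    intro x y
    obtain ⟨φ, hφΓ, hφx⟩ := hTrans x y
    have h1 : P (B y) = P (curShift φ ⁻¹' B x) := by rw [hBshift φ x, hφx]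
    rw [h1, ← Measure.map_apply (measurable_curShift φ) (hBmeas x), hinv φ hφΓ]
  have hB0 : ∀ x : V, P (B x) = 0 := by
    intro x₀
    by_contra hc0
    have htop : ∑' x : V, P (B x) = ⊤ := by
      calc ∑' x : V, P (B x) = ∑' _ : V, P (B x₀) := tsum_congr fun x => hPB x x₀
        _ = ⊤ := ENNReal.tsum_const_eq_top_of_ne_zero hc0
    have hle : ∑' x : V, P (B x) ≤ 4 := by
      have heq : ∀ x : V, P (B x)
          = ∫⁻ n, (B x).indicator (fun _ => (1 : ENNReal)) n ∂P :=
        fun x => (lintegral_indicator_one (hBmeas x)).symm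
      calc ∑' x : V, P (B x)
          = ∑' x : V, ∫⁻ n, (B x).indicator (fun _ => (1 : ENNReal)) n ∂P :=
            tsum_congr heq
        _ = ∫⁻ n, ∑' x : V, (B x).indicator (fun _ => (1 : ENNReal)) n ∂P :=
            (lintegral_tsum fun x =>
              ((measurable_const.indicator (hBmeas x)).aemeasurable)).symm
        _ ≤ ∫⁻ _, 4 ∂P := by
            refine lintegral_mono fun n => ?_
            by_cases hbound : ∀ t : Finset V, ↑t ⊆ FsetU n → t.card ≤ 4
            · have hfin : (FsetU n).Finite := by
                by_contra hinf
                obtain ⟨t, hts, hcard⟩ :=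
                  (show (FsetU n).Infinite from hinf).exists_subset_card_eq 5
                have := hbound t hts
                omega
              have hcard4 : hfin.toFinset.card ≤ 4 := hbound _ (by simp)
              calc ∑' x : V, (B x).indicator (fun _ => (1 : ENNReal)) n
                  ≤ ∑' x : V, (FsetU n).indicator (fun _ => (1 : ENNReal)) x := by
                    refine ENNReal.tsum_le_tsum fun x => ?_
                    by_cases hx : n ∈ B x
                    · rw [Set.indicator_of_mem hx, Set.indicator_of_mem hx.1]
                    · rw [Set.indicator_of_notMem hx]
                      exact zero_le
                _ = ∑ x ∈ hfin.toFinset,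
                      (FsetU n).indicator (fun _ => (1 : ENNReal)) x := by
                    refine tsum_eq_sum ?_
                    intro x hx
                    exact Set.indicator_of_notMem
                      (fun h => hx (hfin.mem_toFinset.2 h)) _
                _ ≤ ∑ _x ∈ hfin.toFinset, 1 := by
                    refine Finset.sum_le_sum fun x _ => ?_
                    by_cases hx : x ∈ FsetU n
                    · rw [Set.indicator_of_mem hx]
                    · rw [Set.indicator_of_notMem hx]; exact zero_le
                _ = (hfin.toFinset.card : ENNReal) := by simp
                _ ≤ 4 := by exact_mod_cast hcard4
            · have hzero : ∀ x : V,
                  (B x).indicator (fun _ => (1 : ENNReal)) n = 0 := by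
                intro x
                exact Set.indicator_of_notMem (fun h => hbound h.2) _
              simp [hzero]
        _ = 4 := by simp
    rw [htop] at hle
    exact absurd hle (by simp)
  have hUnionNull : P (⋃ x : V, B x) = 0 := measure_iUnion_null hB0
  have hUmeas : MeasurableSet {n : Sym2 V → ℕ | (Uset n).Nonempty} := by
    have h : {n : Sym2 V → ℕ | (Uset n).Nonempty} =
        ⋃ (p : V × V), {n | eventA p.1 p.2 n} := by
      ext n
      simp only [Set.mem_iUnion, Set.mem_setOf_eq]
      constructor
      · rintro ⟨e, a, b, rfl, hA⟩; exact ⟨(a, b), hA⟩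
      · rintro ⟨⟨a, b⟩, hA⟩; exact ⟨s(a, b), a, b, rfl, hA⟩
    rw [h]
    exact MeasurableSet.iUnion fun p => meas_eventA p.1 p.2
  have hUinvar : ∀ φ ∈ Γ, curShift φ ⁻¹' {n : Sym2 V → ℕ | (Uset n).Nonempty} =
      {n : Sym2 V → ℕ | (Uset n).Nonempty} := by
    intro φ _
    ext n
    simp only [Set.mem_preimage, Set.mem_setOf_eq]
    constructor
    · rintro ⟨e, he⟩
      exact ⟨Sym2.map φ e, (Uset_shift φ).1 he⟩
    · rintro ⟨e, he⟩
      refine ⟨Sym2.map ((φ⁻¹ : Equiv.Perm V) : V → V) e, (Uset_shift φ).2 ?_⟩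
      rw [sym2_map_inv_cancel]
      exact he
  have hU1 : P {n : Sym2 V → ℕ | (Uset n).Nonempty} = 1 := by
    rcases herg _ hUmeas hUinvar with h0 | h1
    · rw [h0] at hU; exact absurd hU (lt_irrefl 0)
    · exact h1
  have haeU : ∀ᵐ n ∂P, (Uset n).Nonempty := by
    rw [MeasureTheory.ae_iff]
    have hc : {n : Sym2 V → ℕ | ¬ (Uset n).Nonempty} =
        {n : Sym2 V → ℕ | (Uset n).Nonempty}ᶜ := rfl
    rw [hc, measure_compl hUmeas (measure_ne_top P _), hU1, measure_univ]
    simp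
  have haeB : ∀ᵐ n ∂P, ∀ x : V, n ∉ B x := by
    rw [MeasureTheory.ae_iff]
    refine measure_mono_null ?_ hUnionNull
    intro n hn
    simp only [Set.mem_setOf_eq, not_forall, not_not] at hn
    obtain ⟨x, hx⟩ := hn
    exact Set.mem_iUnion.2 ⟨x, hx⟩
  filter_upwards [hgeo, haeU, haeB] with n hg hUne hnB
  intro v hinj hpos
  by_contra hcon
  push_neg at hcon
  have hseg : ∀ i j : ℕ, i ≤ j → conn (offU n) (v i) (v j) := by
    intro i j hij
    induction j, hij using Nat.le_induction with
    | base => exact conn_refl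
    | succ j hij ih =>
      exact connOn_trans ih (connOn_single (Set.mem_univ _) (Set.mem_univ _)
        (offU_pos.2 ⟨hpos j, hcon j⟩))
  have hendy : endy n (v 0) := by
    intro S
    have hfin : {i : ℕ | v i ∈ (S : Set V)}.Finite :=
      S.finite_toSet.preimage hinj.injOn
    obtain ⟨m, hm⟩ := hfin.bddAbove
    have hout : ∀ j : ℕ, m + 1 ≤ j → v j ∉ (S : Set V) := by
      intro j hj hmem
      have := hm hmem
      omega
    refine ⟨v (m + 1), hseg 0 (m + 1) (Nat.zero_le _), ?_⟩
    have hsegS : ∀ k : ℕ,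
        connOn (offU n) ((S : Set V))ᶜ (v (m + 1)) (v (m + 1 + k)) := by
      intro k
      induction k with
      | zero => exact connOn_refl (hout (m + 1) le_rfl)
      | succ k ih =>
        exact connOn_trans ih (connOn_single (hout _ (by omega))
          (hout _ (by omega)) (offU_pos.2 ⟨hpos _, hcon _⟩))
    refine Set.infinite_of_injective_forall_mem
      (f := fun k : ℕ => v (m + 1 + k)) ?_ ?_
    · intro k1 k2 h
      have := hinj h
      omega
    · intro k
      exact hsegS k
  obtain ⟨x, hxF⟩ := FsetU_nonempty hUne hg.2.1 hendy
  exact hnB x ⟨hxF, FsetU_card_bound hg.2.1 hg.2.2⟩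


end RC
end
end

section
/- Let Λ be a finite vertex set endowed with nonnegative couplings (J_{xy}) and let β ≥ 0. For any x, y ∈ Λ, ⟨σ_xσ_y⟩⁰_{Λ,β} = ( Σ over n ∈ Ω_Λ with ∂n = {x,y} of ω_β(n) ) / ( Σ over n ∈ Ω_Λ with ∂n = ∅ of ω_β(n) ), where ⟨σ_xσ_y⟩⁰_{Λ,β} is the expectation of σ_xσ_y under the probability measure on {−1,+1}^Λ proportional to exp(β Σ_{u,v∈Λ} J_{uv}σ_uσ_v). -/
set_option linter.unusedSectionVars false

open MeasureTheory Filter Topology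

noncomputable section

namespace RC

variable {V : Type*} [DecidableEq V]

/-! ### Auxiliary lemmas for the random current representation -/

section Aux

open Finset

private def aux_prodFun (n : ℕ) (g : Fin n → ℕ → ℝ) : (Fin n → ℕ) → ℝ :=
  fun f => ∏ i, g i (f i)

private lemma aux_hasSum_pi_prod_fin (n : ℕ) :
    ∀ g : Fin n → ℕ → ℝ, (∀ i, Summable fun k => |g i k|) →
      HasSum (aux_prodFun n g) (∏ i, ∑' k, g i k) := by
  induction n with
  | zero =>
    intro g _
    have h1 : aux_prodFun 0 g = fun _ => (1 : ℝ) := by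
      funext f; simp [aux_prodFun]
    have h2 : (∏ i : Fin 0, ∑' k, g i k) = 1 := by simp
    rw [h1, h2]
    simpa using hasSum_fintype (fun _ : Fin 0 → ℕ => (1 : ℝ))
  | succ n ih =>
    intro g hg
    have ihg : HasSum (aux_prodFun n (fun i => g i.succ))
        (∏ i : Fin n, ∑' k, g i.succ k) := ih _ (fun i => hg i.succ)
    have ihabs : HasSum (aux_prodFun n (fun i k => |g i.succ k|))
        (∏ i : Fin n, ∑' k, |g i.succ k|) :=
      ih (fun i k => |g i.succ k|) (fun i => by simpa [abs_abs] using hg i.succ)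
    have h0 : HasSum (g 0) (∑' k, g 0 k) := (summable_abs_iff.mp (hg 0)).hasSum
    have hsum : Summable (fun p : ℕ × (Fin n → ℕ) =>
        g 0 p.1 * aux_prodFun n (fun i => g i.succ) p.2) := by
      have h1 : Summable fun k : ℕ => ‖g 0 k‖ := by
        simpa [Real.norm_eq_abs] using hg 0
      have h2 : Summable fun f : Fin n → ℕ => ‖aux_prodFun n (fun i => g i.succ) f‖ := by
        refine ihabs.summable.congr fun f => ?_
        simp [aux_prodFun, Real.norm_eq_abs, Finset.abs_prod]
      exact summable_mul_of_summable_norm h1 h2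
    have hmul : HasSum (fun p : ℕ × (Fin n → ℕ) =>
          g 0 p.1 * aux_prodFun n (fun i => g i.succ) p.2)
        ((∑' k, g 0 k) * ∏ i : Fin n, ∑' k, g i.succ k) := h0.mul ihg hsum
    have h2 : (fun p : ℕ × (Fin n → ℕ) => g 0 p.1 * aux_prodFun n (fun i => g i.succ) p.2)
        = aux_prodFun (n+1) g ∘ (Fin.consEquiv (fun _ => ℕ)) := by
      funext p
      show g 0 p.1 * ∏ i, g i.succ (p.2 i)
          = ∏ i, g i (Fin.cons (α := fun _ => ℕ) p.1 p.2 i)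
      rw [Fin.prod_univ_succ]
      simp
    rw [h2] at hmul
    have key := (Equiv.hasSum_iff (Fin.consEquiv (fun _ : Fin (n+1) => ℕ))).mp hmul
    rw [Fin.prod_univ_succ]
    exact key

private lemma aux_hasSum_pi_prod {ι : Type*} [Fintype ι] (g : ι → ℕ → ℝ)
    (hg : ∀ i, Summable fun k => |g i k|) :
    HasSum (fun f : ι → ℕ => ∏ i, g i (f i)) (∏ i, ∑' k, g i k) := by
  classical
  let e := Fintype.equivFin ι
  have h := aux_hasSum_pi_prod_fin (Fintype.card ι) (fun j => g (e.symm j))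
    (fun j => hg _)
  let e2 : (ι → ℕ) ≃ (Fin (Fintype.card ι) → ℕ) := Equiv.arrowCongr e (Equiv.refl ℕ)
  rw [← (e2.symm).hasSum_iff]
  have h1 : ((fun f : ι → ℕ => ∏ i, g i (f i)) ∘ e2.symm)
      = aux_prodFun (Fintype.card ι) (fun j => g (e.symm j)) := by
    funext h
    show ∏ i, g i (e2.symm h i) = ∏ j, g (e.symm j) (h j)
    rw [← Equiv.prod_comp e (fun j => g (e.symm j) (h j))]
    refine Finset.prod_congr rfl fun i _ => ?_
    have he : e2.symm h i = h (e i) := rfl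
    rw [he]
    simp
  have h2 : (∏ i, ∑' k, g i k) = ∏ j, ∑' k, g (e.symm j) k :=
    (Equiv.prod_comp e.symm (fun i => ∑' k, g i k)).symm
  rw [h1, h2]
  exact h

variable [Fintype V]

private lemma aux_prod_pairs_pow (s : V → ℝ) (n : Sym2 V → ℕ)
    (hdiag : ∀ v, n s(v, v) = 0) :
    ∏ e ∈ pairs (Finset.univ : Finset V), (sprod s e) ^ (n e)
      = ∏ v, (s v) ^ (∑ w, n s(v, w)) := by
  classical
  have hmaps : ∀ p ∈ (Finset.univ : Finset V).offDiag,
      Sym2.mk p.1 p.2 ∈ pairs (Finset.univ : Finset V) := by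
    rintro ⟨a, b⟩ hp
    rw [Finset.mem_offDiag] at hp
    simp only [pairs, Finset.mem_filter]
    exact ⟨by simp [Finset.mk_mem_sym2_iff], by simp [Sym2.mk_isDiag_iff, hp.2.2]⟩
  have hfib := Finset.prod_fiberwise_of_maps_to hmaps
    (fun p : V × V => (s p.1) ^ (n (Sym2.mk p.1 p.2)))
  have hfibe : ∀ e ∈ pairs (Finset.univ : Finset V),
      (sprod s e) ^ (n e)
        = ∏ p ∈ (Finset.univ : Finset V).offDiag.filter (fun p => Sym2.mk p.1 p.2 = e),
            (s p.1) ^ (n (Sym2.mk p.1 p.2)) := by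
    intro e
    induction e using Sym2.inductionOn with
    | hf a b =>
      intro he
      have hab : a ≠ b := by
        simp only [pairs, Finset.mem_filter] at he
        exact fun h => he.2 (Sym2.mk_isDiag_iff.mpr h)
      have hfil : ((Finset.univ : Finset V).offDiag.filter
          fun p => Sym2.mk p.1 p.2 = s(a, b)) = {(a, b), (b, a)} := by
        ext ⟨u, v⟩
        simp only [Finset.mem_filter, Finset.mem_offDiag, Finset.mem_univ, true_and,
          Finset.mem_insert, Finset.mem_singleton, Prod.mk.injEq, Sym2.eq_iff]
        constructor
        · rintro ⟨-, (⟨h1, h2⟩ | ⟨h1, h2⟩)⟩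
          · exact Or.inl ⟨h1, h2⟩
          · exact Or.inr ⟨h1, h2⟩
        · rintro (⟨h1, h2⟩ | ⟨h1, h2⟩) <;> subst h1 <;> subst h2
          · exact ⟨hab, Or.inl ⟨rfl, rfl⟩⟩
          · exact ⟨hab.symm, Or.inr ⟨rfl, rfl⟩⟩
      rw [hfil]
      have hne : ((a, b) : V × V) ≠ (b, a) := fun h => hab (congrArg Prod.fst h)
      rw [Finset.prod_insert (by simpa using hne), Finset.prod_singleton]
      have hswap : s(b, a) = s(a, b) := Sym2.eq_swap
      show (sprod s s(a, b)) ^ n s(a, b) = s a ^ n s(a, b) * s b ^ n s(b, a)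
      rw [hswap]
      have hsp : sprod s s(a, b) = s a * s b := rfl
      rw [hsp, mul_pow]
  have hsub : ((Finset.univ : Finset V).offDiag)
      ⊆ (Finset.univ : Finset V) ×ˢ (Finset.univ : Finset V) := by
    intro p _
    exact Finset.mem_product.mpr ⟨Finset.mem_univ _, Finset.mem_univ _⟩
  calc ∏ e ∈ pairs (Finset.univ : Finset V), (sprod s e) ^ (n e)
      = ∏ e ∈ pairs (Finset.univ : Finset V),
          ∏ p ∈ (Finset.univ : Finset V).offDiag.filter (fun p => Sym2.mk p.1 p.2 = e),
            (s p.1) ^ (n (Sym2.mk p.1 p.2)) := Finset.prod_congr rfl hfibe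
    _ = ∏ p ∈ (Finset.univ : Finset V).offDiag, (s p.1) ^ (n (Sym2.mk p.1 p.2)) := hfib
    _ = ∏ p ∈ (Finset.univ : Finset V) ×ˢ (Finset.univ : Finset V),
          (s p.1) ^ (n (Sym2.mk p.1 p.2)) := by
        refine Finset.prod_subset hsub fun p _ hp => ?_
        rcases p with ⟨a, b⟩
        have hab : a = b := by
          by_contra hab
          exact hp (Finset.mem_offDiag.mpr ⟨Finset.mem_univ _, Finset.mem_univ _, hab⟩)
        subst hab
        simp [hdiag a]
    _ = ∏ v, ∏ w, (s v) ^ (n s(v, w)) := by rw [Finset.prod_product]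
    _ = ∏ v, (s v) ^ (∑ w, n s(v, w)) :=
        Finset.prod_congr rfl fun v _ => Finset.prod_pow_eq_pow_sum _ _ _

/-- The equivalence between currents on `univ` and functions on the pairs. -/
private def aux_curEquiv :
    CurrentOn (Finset.univ : Finset V) ≃
      ({e // e ∈ pairs (Finset.univ : Finset V)} → ℕ) where
  toFun m e := m.1 e.1
  invFun f := ⟨fun e => if h : e ∈ pairs (Finset.univ : Finset V) then f ⟨e, h⟩ else 0,
    fun e he => by
      by_contra h
      exact he (dif_neg h)⟩
  left_inv m := by
    apply Subtype.ext
    funext e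
    change (if h : e ∈ pairs (Finset.univ : Finset V) then m.1 e else 0) = m.1 e
    by_cases h : e ∈ pairs (Finset.univ : Finset V)
    · rw [dif_pos h]
    · rw [dif_neg h]
      by_contra hne
      exact h (m.2 e fun h0 => hne h0.symm)
  right_inv f := by
    funext e
    change (if h : e.1 ∈ pairs (Finset.univ : Finset V) then f ⟨e.1, h⟩ else 0) = f e
    rw [dif_pos e.2, Subtype.coe_eta]

private lemma aux_hasSum_exp (J : Sym2 V → ℝ) (β : ℝ) (s : V → ℝ) :
    HasSum (fun m : CurrentOn (Finset.univ : Finset V) =>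
        wt J β Finset.univ m.1 * ∏ v, (s v) ^ (∑ w, m.1 s(v, w)))
      (Real.exp (β * ∑ e ∈ pairs (Finset.univ : Finset V), J e * sprod s e)) := by
  classical
  have hsumm : ∀ e : {e // e ∈ pairs (Finset.univ : Finset V)}, Summable fun k : ℕ =>
      |(β * J e.1 * sprod s e.1) ^ k / (k.factorial : ℝ)| := by
    intro e
    refine (Real.summable_pow_div_factorial |β * J e.1 * sprod s e.1|).congr fun k => ?_
    rw [abs_div, abs_pow, Nat.abs_cast]
  have hpi := aux_hasSum_pi_prod
    (fun (e : {e // e ∈ pairs (Finset.univ : Finset V)}) (k : ℕ) =>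
      (β * J e.1 * sprod s e.1) ^ k / (k.factorial : ℝ))
    hsumm
  have texp : ∀ x : ℝ, (∑' k : ℕ, x ^ k / (k.factorial : ℝ)) = Real.exp x := by
    intro x
    rw [Real.exp_eq_exp_ℝ]
    exact (congrFun (NormedSpace.exp_eq_tsum_div (𝔸 := ℝ)) x).symm
  have hexp : (∏ e : {e // e ∈ pairs (Finset.univ : Finset V)},
        ∑' k : ℕ, (β * J e.1 * sprod s e.1) ^ k / (k.factorial : ℝ))
      = Real.exp (β * ∑ e ∈ pairs (Finset.univ : Finset V), J e * sprod s e) := by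
    rw [Finset.mul_sum, Real.exp_sum,
      Finset.prod_subtype (pairs (Finset.univ : Finset V)) (fun _ => Iff.rfl)
        (fun e => Real.exp (β * (J e * sprod s e)))]
    refine Finset.prod_congr rfl fun e _ => ?_
    rw [texp, mul_assoc]
  rw [← hexp]
  have hfun : (fun m : CurrentOn (Finset.univ : Finset V) =>
      wt J β Finset.univ m.1 * ∏ v, (s v) ^ (∑ w, m.1 s(v, w)))
      = (fun f : {e // e ∈ pairs (Finset.univ : Finset V)} → ℕ =>
          ∏ e : {e // e ∈ pairs (Finset.univ : Finset V)},
            (β * J e.1 * sprod s e.1) ^ (f e) / ((f e).factorial : ℝ))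
        ∘ aux_curEquiv := by
    funext m
    show wt J β Finset.univ m.1 * ∏ v, (s v) ^ (∑ w, m.1 s(v, w))
      = ∏ e : {e // e ∈ pairs (Finset.univ : Finset V)},
          (β * J e.1 * sprod s e.1) ^ (m.1 e.1) / ((m.1 e.1).factorial : ℝ)
    have hdiag : ∀ v, m.1 s(v, v) = 0 := by
      intro v
      by_contra h
      have h2 := m.2 _ h
      simp only [pairs, Finset.mem_filter] at h2
      exact h2.2 (Sym2.mk_isDiag_iff.mpr rfl)
    rw [← aux_prod_pairs_pow s m.1 hdiag, wt, ← Finset.prod_mul_distrib,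
      Finset.prod_subtype (pairs (Finset.univ : Finset V)) (fun _ => Iff.rfl)
        (fun e => (β * J e) ^ (m.1 e) / ((m.1 e).factorial : ℝ) * (sprod s e) ^ (m.1 e))]
    refine Finset.prod_congr rfl fun e _ => ?_
    rw [mul_pow, mul_pow]
    ring
  rw [hfun]
  exact (aux_curEquiv.hasSum_iff).mpr hpi

private lemma aux_sum_spin_prod (d : V → ℕ) :
    ∑ σ : V → Bool, ∏ v, (spin (σ v)) ^ (d v)
      = if ∀ v, Even (d v) then (2 : ℝ) ^ (Fintype.card V) else 0 := by
  classical
  have h1 : ∑ σ : V → Bool, ∏ v, (spin (σ v)) ^ (d v)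
      = ∏ v, ∑ b : Bool, (spin b) ^ (d v) := by
    rw [Finset.prod_univ_sum, Fintype.piFinset_univ]
  rw [h1]
  have h2 : ∀ v, (∑ b : Bool, (spin b) ^ (d v)) = if Even (d v) then (2 : ℝ) else 0 := by
    intro v
    rw [Fintype.sum_bool]
    show (1 : ℝ) ^ (d v) + (-1 : ℝ) ^ (d v) = _
    rcases Nat.even_or_odd (d v) with h | h
    · rw [if_pos h, h.neg_one_pow, one_pow]; norm_num
    · have hne : ¬ Even (d v) := by
        rw [Nat.even_iff]
        rw [Nat.odd_iff] at h
        omega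
      rw [if_neg hne, h.neg_one_pow, one_pow]; norm_num
  by_cases h : ∀ v, Even (d v)
  · rw [if_pos h]
    rw [Finset.prod_congr rfl fun v _ => (h2 v).trans (if_pos (h v))]
    simp [Finset.prod_const, Finset.card_univ]
  · rw [if_neg h]
    push_neg at h
    obtain ⟨v, hv⟩ := h
    exact Finset.prod_eq_zero (Finset.mem_univ v) ((h2 v).trans (if_neg hv))

private lemma aux_sum_exp_eq (J : Sym2 V → ℝ) (β : ℝ) (A : Finset V) :
    ∑ σ : {x // x ∈ (Finset.univ : Finset V)} → Bool,
      Real.exp (β * ∑ e ∈ pairs (Finset.univ : Finset V),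
          J e * sprod (extCfg Finset.univ σ) e) * ∏ v ∈ A, extCfg Finset.univ σ v
      = 2 ^ (Fintype.card V) * totalWt J β Finset.univ A := by
  classical
  have hσ : ∀ σ : {x // x ∈ (Finset.univ : Finset V)} → Bool,
      HasSum (fun m : CurrentOn (Finset.univ : Finset V) =>
        (wt J β Finset.univ m.1 * ∏ v, (extCfg Finset.univ σ v) ^ (∑ w, m.1 s(v, w)))
          * ∏ v ∈ A, extCfg Finset.univ σ v)
      (Real.exp (β * ∑ e ∈ pairs (Finset.univ : Finset V),
          J e * sprod (extCfg Finset.univ σ) e) * ∏ v ∈ A, extCfg Finset.univ σ v) :=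
    fun σ => (aux_hasSum_exp J β (extCfg Finset.univ σ)).mul_right _
  have hswap : ∑ σ : {x // x ∈ (Finset.univ : Finset V)} → Bool,
      Real.exp (β * ∑ e ∈ pairs (Finset.univ : Finset V),
          J e * sprod (extCfg Finset.univ σ) e) * ∏ v ∈ A, extCfg Finset.univ σ v
      = ∑' m : CurrentOn (Finset.univ : Finset V),
          ∑ σ : {x // x ∈ (Finset.univ : Finset V)} → Bool,
            (wt J β Finset.univ m.1 * ∏ v, (extCfg Finset.univ σ v) ^ (∑ w, m.1 s(v, w)))
              * ∏ v ∈ A, extCfg Finset.univ σ v := by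
    refine Eq.trans (Finset.sum_congr rfl fun σ _ => ((hσ σ).tsum_eq).symm) ?_
    exact (Summable.tsum_finsetSum (fun σ _ => (hσ σ).summable)).symm
  rw [hswap]
  have hinner : ∀ m : CurrentOn (Finset.univ : Finset V),
      (∑ σ : {x // x ∈ (Finset.univ : Finset V)} → Bool,
        (wt J β Finset.univ m.1 * ∏ v, (extCfg Finset.univ σ v) ^ (∑ w, m.1 s(v, w)))
          * ∏ v ∈ A, extCfg Finset.univ σ v)
      = 2 ^ (Fintype.card V) *
          (if srcF Finset.univ m.1 = A then wt J β Finset.univ m.1 else 0) := by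
    intro m
    set d : V → ℕ := fun v => (∑ w, m.1 s(v, w)) + (if v ∈ A then 1 else 0) with hd
    have hcomb : ∀ σ : {x // x ∈ (Finset.univ : Finset V)} → Bool,
        (∏ v, (extCfg Finset.univ σ v) ^ (∑ w, m.1 s(v, w)))
          * ∏ v ∈ A, extCfg Finset.univ σ v
        = ∏ v, (extCfg Finset.univ σ v) ^ (d v) := by
      intro σ
      have hv1 : ∀ v, (extCfg Finset.univ σ v) ^ (d v)
          = (extCfg Finset.univ σ v) ^ (∑ w, m.1 s(v, w))
            * (if v ∈ A then extCfg Finset.univ σ v else 1) := by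
        intro v
        simp only [hd, pow_add]
        by_cases hv : v ∈ A <;> simp [hv]
      rw [Finset.prod_congr rfl fun v _ => hv1 v, Finset.prod_mul_distrib]
      congr 1
      rw [Finset.prod_ite_mem, Finset.univ_inter]
    have hsum2 : (∑ σ : {x // x ∈ (Finset.univ : Finset V)} → Bool,
        ∏ v, (extCfg Finset.univ σ v) ^ (d v))
        = if ∀ v, Even (d v) then (2 : ℝ) ^ (Fintype.card V) else 0 := by
      rw [← aux_sum_spin_prod d]
      refine Fintype.sum_equiv
        (Equiv.arrowCongr (Equiv.subtypeUnivEquiv (fun x => Finset.mem_univ x))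
          (Equiv.refl Bool)) _ _ fun σ => ?_
      refine Finset.prod_congr rfl fun v _ => ?_
      congr 1
      simp [extCfg, Equiv.arrowCongr, Equiv.subtypeUnivEquiv]
    have hparity : (∀ v, Even (d v)) ↔ srcF Finset.univ m.1 = A := by
      rw [Finset.ext_iff]
      simp only [srcF, Finset.mem_filter, Finset.mem_univ, true_and, hd]
      constructor
      · intro h v
        have hv2 := h v
        by_cases hv : v ∈ A <;>
          simp only [hv, if_true, if_false, iff_true, iff_false, Nat.even_iff] at hv2 ⊢ <;>
          omega
      · intro h v
        have hv2 := h v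
        by_cases hv : v ∈ A <;>
          simp only [hv, if_true, if_false, iff_true, iff_false, Nat.even_iff] at hv2 ⊢ <;>
          omega
    calc (∑ σ : {x // x ∈ (Finset.univ : Finset V)} → Bool,
          (wt J β Finset.univ m.1 * ∏ v, (extCfg Finset.univ σ v) ^ (∑ w, m.1 s(v, w)))
            * ∏ v ∈ A, extCfg Finset.univ σ v)
        = wt J β Finset.univ m.1 * ∑ σ : {x // x ∈ (Finset.univ : Finset V)} → Bool,
            ∏ v, (extCfg Finset.univ σ v) ^ (d v) := by
          rw [Finset.mul_sum]
          refine Finset.sum_congr rfl fun σ _ => ?_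
          rw [mul_assoc, hcomb σ]
      _ = wt J β Finset.univ m.1 *
            (if ∀ v, Even (d v) then (2 : ℝ) ^ (Fintype.card V) else 0) := by rw [hsum2]
      _ = 2 ^ (Fintype.card V) *
            (if srcF Finset.univ m.1 = A then wt J β Finset.univ m.1 else 0) := by
          by_cases h : ∀ v, Even (d v)
          · rw [if_pos h, if_pos (hparity.mp h)]; ring
          · rw [if_neg h, if_neg (fun hc => h (hparity.mpr hc))]; ring
  rw [tsum_congr hinner, tsum_mul_left, totalWt]

end Aux

/-- The random current representation of the free-boundary two-point function. -/
theorem statement14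
    {V : Type*} [DecidableEq V] [Fintype V]
    (J : Sym2 V → ℝ) (hJ : ∀ e, 0 ≤ J e) (β : ℝ) (hβ : 0 ≤ β)
    (x y : V) (hxy : x ≠ y) :
    corr J Finset.univ β (fun _ => 0) x y =
      totalWt J β Finset.univ {x, y} / totalWt J β Finset.univ ∅ := by
  classical
  have hham : ∀ σ : {x // x ∈ (Finset.univ : Finset V)} → Bool,
      -β * ham J Finset.univ (fun _ => 0) σ
        = β * ∑ e ∈ pairs (Finset.univ : Finset V), J e * sprod (extCfg Finset.univ σ) e := by
    intro σ
    have hb : ∀ v : V, bField J Finset.univ (fun _ => 0) v = 0 := by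
      intro v
      rw [bField]
      simp
    rw [ham]
    simp only [hb, mul_zero, Finset.sum_const_zero, sub_zero]
    ring
  have hnum := aux_sum_exp_eq (V := V) J β ({x, y} : Finset V)
  have hden := aux_sum_exp_eq (V := V) J β (∅ : Finset V)
  have hZ : Zspin J Finset.univ β (fun _ => 0)
      = 2 ^ (Fintype.card V) * totalWt J β Finset.univ ∅ := by
    rw [Zspin, ← hden]
    refine Finset.sum_congr rfl fun σ _ => ?_
    rw [hham σ]
    simp
  have hN : (∑ σ : {x // x ∈ (Finset.univ : Finset V)} → Bool,
      Real.exp (-β * ham J Finset.univ (fun _ => 0) σ)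
        * (extCfg Finset.univ σ x * extCfg Finset.univ σ y))
      = 2 ^ (Fintype.card V) * totalWt J β Finset.univ {x, y} := by
    rw [← hnum]
    refine Finset.sum_congr rfl fun σ _ => ?_
    rw [hham σ, Finset.prod_pair hxy]
  rw [corr, expval, hN, hZ]
  exact mul_div_mul_left _ _ (by positivity)

end RC
end
end
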